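/- arXiv:1710.10054 — 9 statements merged into one kernel-verified Lean document; each statement's English description precedes it below -/
import Mathlib

section
/- Let A, B be nonempty closed subsets of a metric space (X,d) such that A and B are complete as subspaces, and let F : X × X → X be a coupling with respect to A and B satisfying d(F(x,y), F(u,v)) ≤ φ(max{d(x,u), d(y,v)}) for all x, v ∈ A and y, u ∈ B, where φ ∈ Φ. Then A ∩ B ≠ ∅ and F has a unique strong coupled fixed point a ∈ A ∩ B with F(a,a) = a. -/
open Filter Topology

theorem cyclic_aux {Y : Type*} [MetricSpace Y] {P Q : Set Y}
    (hP : IsComplete P) (hQ : IsComplete Q)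
    (S : Y → Y) (hSP : ∀ p ∈ P, S p ∈ Q) (hSQ : ∀ q ∈ Q, S q ∈ P)
    (φ : ℝ → ℝ)
    (hφpos : ∀ t, 0 ≤ t → 0 ≤ φ t)
    (hφmono : ∀ s t, 0 ≤ s → s ≤ t → φ s ≤ φ t)
    (hφlt : ∀ t, 0 < t → φ t < t)
    (hφlim : ∀ t, 0 < t → ∃ L, Filter.Tendsto φ (nhdsWithin t (Set.Ioi t)) (nhds L) ∧ L < t)
    (hcon : ∀ p ∈ P, ∀ q ∈ Q, dist (S p) (S q) ≤ φ (dist p q))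
    {p0 : Y} (hp0 : p0 ∈ P) :
    ∃ a, a ∈ P ∩ Q ∧ S a = a := by
  -- φ is ≤ id on [0,∞)
  have hφ0 : φ 0 ≤ 0 := by
    by_contra h
    push_neg at h
    have h1 := hφmono 0 (φ 0) le_rfl h.le
    have h2 := hφlt (φ 0) h
    linarith
  have hφle : ∀ t, 0 ≤ t → φ t ≤ t := by
    intro t ht
    rcases eq_or_lt_of_le ht with h | h
    · simpa [← h] using hφ0
    · exact (hφlt t h).le
  set z : ℕ → Y := fun n => S^[n] p0 with hz
  have hzsucc : ∀ n, z (n + 1) = S (z n) := by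
    intro n; simp [hz, Function.iterate_succ_apply']
  have hmem : ∀ n, (n % 2 = 0 → z n ∈ P) ∧ (n % 2 = 1 → z n ∈ Q) := by
    intro n
    induction n with
    | zero => exact ⟨fun _ => hp0, by omega⟩
    | succ n ih =>
      constructor
      · intro h
        rw [hzsucc]
        exact hSQ _ (ih.2 (by omega))
      · intro h
        rw [hzsucc]
        exact hSP _ (ih.1 (by omega))
  have hmemPQ : ∀ n, z n ∈ P ∪ Q := by
    intro n
    rcases Nat.even_or_odd n with h | h
    · exact Or.inl ((hmem n).1 (by rw [Nat.even_iff] at h; omega))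
    · exact Or.inr ((hmem n).2 (by rw [Nat.odd_iff] at h; omega))
  have hkey : ∀ m n, m % 2 ≠ n % 2 → dist (z (m+1)) (z (n+1)) ≤ φ (dist (z m) (z n)) := by
    intro m n h
    rw [hzsucc, hzsucc]
    rcases Nat.eq_zero_or_pos (m % 2) with hm | hm
    · have hzm := (hmem m).1 hm
      have hzn := (hmem n).2 (by omega)
      exact hcon _ hzm _ hzn
    · have hzm := (hmem m).2 (by omega)
      have hzn := (hmem n).1 (by omega)
      calc dist (S (z m)) (S (z n)) = dist (S (z n)) (S (z m)) := dist_comm _ _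
        _ ≤ φ (dist (z n) (z m)) := hcon _ hzn _ hzm
        _ = φ (dist (z m) (z n)) := by rw [dist_comm]
  set c : ℕ → ℝ := fun n => dist (z n) (z (n+1)) with hc
  have hc1 : ∀ n, c (n+1) ≤ φ (c n) := fun n => hkey n (n+1) (by omega)
  have hcanti : Antitone c :=
    antitone_nat_of_succ_le fun n => (hc1 n).trans (hφle _ dist_nonneg)
  have hbdd : BddBelow (Set.range c) := ⟨0, by rintro _ ⟨n, rfl⟩; exact dist_nonneg⟩
  have htend : Tendsto c atTop (𝓝 (⨅ n, c n)) := tendsto_atTop_ciInf hcanti hbdd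
  set δ : ℝ := ⨅ n, c n with hδ
  have hδ0 : 0 ≤ δ := le_ciInf fun n => dist_nonneg
  have hδle : ∀ n, δ ≤ c n := fun n => ciInf_le hbdd n
  have hδeq : δ = 0 := by
    by_contra hne
    have hδpos : 0 < δ := lt_of_le_of_ne hδ0 (Ne.symm hne)
    by_cases hall : ∀ n, δ < c n
    · have htend' : Tendsto c atTop (𝓝[>] δ) :=
        tendsto_nhdsWithin_iff.mpr ⟨htend, Filter.Eventually.of_forall hall⟩
      obtain ⟨L, hL1, hL2⟩ := hφlim δ hδpos
      have hφc : Tendsto (fun n => φ (c n)) atTop (𝓝 L) := hL1.comp htend'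
      have hcs : Tendsto (fun n => c (n+1)) atTop (𝓝 δ) :=
        htend.comp (tendsto_add_atTop_nat 1)
      have : δ ≤ L := le_of_tendsto_of_tendsto' hcs hφc hc1
      linarith
    · push_neg at hall
      obtain ⟨n, hn⟩ := hall
      have hcn : c n = δ := le_antisymm hn (hδle n)
      have : δ ≤ φ δ := hcn ▸ (hδle (n+1)).trans (hc1 n)
      exact absurd this (not_le.mpr (hφlt δ hδpos))
  have hc0 : Tendsto c atTop (𝓝 0) := hδeq ▸ htend
  -- Cauchy
  have hcauchy : CauchySeq z := by
    rw [Metric.cauchySeq_iff]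
    intro ε hε
    set ε' := ε / 2 with hε'def
    have hε' : 0 < ε' := by positivity
    have hφε : φ ε' < ε' := hφlt _ hε'
    have : ∀ᶠ n in atTop, c n < (ε' - φ ε') / 2 :=
      hc0.eventually (gt_mem_nhds (by linarith))
    obtain ⟨N, hN⟩ := this.exists_forall_of_atTop
    have key : ∀ k n, N ≤ n → dist (z n) (z (n + k)) ≤ ε' := by
      intro k
      induction k using Nat.strong_induction_on with
      | _ k ih =>
        match k with
        | 0 => intro n _; simpa using hε'.le
        | 1 =>
          intro n hn
          have h := hN n hn
          have hφε0 : 0 ≤ φ ε' := hφpos _ hε'.le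
          simp only [hc] at h
          linarith
        | (k+2) =>
          intro n hn
          rcases Nat.even_or_odd k with hk | hk
          · -- k even, so total step k+2 even; n and n+k+1 have different parity
            have e1 : n + (k+2) = (n + (k+1)) + 1 := by omega
            have h1 : dist (z (n+1)) (z (n + (k+2))) ≤ φ (dist (z n) (z (n + (k+1)))) := by
              rw [e1]
              exact hkey n (n + (k+1)) (by rw [Nat.even_iff] at hk; omega)
            have h2 : dist (z n) (z (n + (k+1))) ≤ ε' := ih (k+1) (by omega) n hn
            have h3 : φ (dist (z n) (z (n + (k+1)))) ≤ φ ε' :=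
              hφmono _ _ dist_nonneg h2
            have h4 := hN n hn
            simp only [hc] at h4
            calc dist (z n) (z (n + (k+2)))
                ≤ dist (z n) (z (n+1)) + dist (z (n+1)) (z (n + (k+2))) := dist_triangle _ _ _
              _ ≤ (ε' - φ ε') / 2 + φ ε' := by linarith
              _ ≤ ε' := by linarith
          · -- k odd
            have e1 : n + (k+2) = (n + (k+1)) + 1 := by omega
            have e2 : n + (k+1) = (n+1) + k := by omega
            have h2 : dist (z (n+1)) (z ((n+1) + k)) ≤ ε' := ih k (by omega) (n+1) (by omega)
            have h1 : dist (z (n+2)) (z (n + (k+2))) ≤ φ (dist (z (n+1)) (z ((n+1) + k))) := by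
              rw [e1, e2]
              exact hkey (n+1) ((n+1) + k) (by rw [Nat.odd_iff] at hk; omega)
            have h3 : φ (dist (z (n+1)) (z ((n+1)+k))) ≤ φ ε' := hφmono _ _ dist_nonneg h2
            have h4 := hN n hn
            have h5 := hN (n+1) (by omega)
            simp only [hc] at h4 h5
            calc dist (z n) (z (n + (k+2)))
                ≤ dist (z n) (z (n+1)) + dist (z (n+1)) (z (n + (k+2))) := dist_triangle _ _ _
              _ ≤ dist (z n) (z (n+1)) + (dist (z (n+1)) (z (n+2)) + dist (z (n+2)) (z (n+(k+2)))) := by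
                  linarith [dist_triangle (z (n+1)) (z (n+2)) (z (n+(k+2)))]
              _ ≤ (ε' - φ ε') / 2 + ((ε' - φ ε') / 2 + φ ε') := by linarith
              _ ≤ ε' := by linarith
    refine ⟨N, fun m hm n hn => ?_⟩
    rcases le_total m n with h | h
    · obtain ⟨k, rfl⟩ := Nat.exists_eq_add_of_le h
      calc dist (z m) (z (m + k)) ≤ ε' := key k m hm
        _ < ε := by linarith
    · obtain ⟨k, rfl⟩ := Nat.exists_eq_add_of_le h
      calc dist (z (n+k)) (z n) = dist (z n) (z (n + k)) := dist_comm _ _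
        _ ≤ ε' := key k n hn
        _ < ε := by linarith
  obtain ⟨a, haPQ, hatend⟩ := cauchySeq_tendsto_of_isComplete (hP.union hQ) hmemPQ hcauchy
  have h2n : Tendsto (fun n => (2*n : ℕ)) atTop atTop :=
    tendsto_atTop_atTop.mpr fun b => ⟨b, fun n hn => by omega⟩
  have h2n1 : Tendsto (fun n => (2*n+1 : ℕ)) atTop atTop :=
    tendsto_atTop_atTop.mpr fun b => ⟨b, fun n hn => by omega⟩
  have haP : a ∈ P :=
    hP.isClosed.mem_of_tendsto (hatend.comp h2n)
      (Filter.Eventually.of_forall fun n => (hmem (2*n)).1 (by omega))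
  have haQ : a ∈ Q :=
    hQ.isClosed.mem_of_tendsto (hatend.comp h2n1)
      (Filter.Eventually.of_forall fun n => (hmem (2*n+1)).2 (by omega))
  have hd : ∀ n, dist (S a) (z (n+1)) ≤ dist a (z n) := by
    intro n
    rw [hzsucc]
    rcases hmemPQ n with h | h
    · calc dist (S a) (S (z n)) = dist (S (z n)) (S a) := dist_comm _ _
        _ ≤ φ (dist (z n) a) := hcon _ h _ haQ
        _ ≤ dist (z n) a := hφle _ dist_nonneg
        _ = dist a (z n) := dist_comm _ _
    · calc dist (S a) (S (z n)) ≤ φ (dist a (z n)) := hcon _ haP _ h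
        _ ≤ dist a (z n) := hφle _ dist_nonneg
  have h1 : Tendsto (fun n => dist (S a) (z (n+1))) atTop (𝓝 (dist (S a) a)) :=
    tendsto_const_nhds.dist (hatend.comp (tendsto_add_atTop_nat 1))
  have h2 : Tendsto (fun n => dist a (z n)) atTop (𝓝 0) := by
    have h2' : Tendsto (fun n => dist a (z n)) atTop (𝓝 (dist a a)) :=
      Tendsto.dist tendsto_const_nhds hatend
    simpa using h2'
  have hSa : dist (S a) a ≤ 0 := le_of_tendsto_of_tendsto' h1 h2 hd
  exact ⟨a, ⟨haP, haQ⟩, by rwa [← dist_le_zero]⟩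

theorem isComplete_prod' {α β : Type*} [UniformSpace α] [UniformSpace β]
    {s : Set α} {t : Set β} (hs : IsComplete s) (ht : IsComplete t) :
    IsComplete (s ×ˢ t) := by
  intro f hf hfle
  have h1 : Cauchy (Filter.map Prod.fst f) := hf.map uniformContinuous_fst
  have h2 : Cauchy (Filter.map Prod.snd f) := hf.map uniformContinuous_snd
  have hle1 : Filter.map Prod.fst f ≤ Filter.principal s := by
    calc Filter.map Prod.fst f ≤ Filter.map Prod.fst (Filter.principal (s ×ˢ t)) :=
          Filter.map_mono hfle
      _ ≤ Filter.principal s := by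
          rw [Filter.map_principal]
          exact Filter.principal_mono.mpr (by rintro x ⟨⟨a, b⟩, ⟨ha, hb⟩, rfl⟩; exact ha)
  have hle2 : Filter.map Prod.snd f ≤ Filter.principal t := by
    calc Filter.map Prod.snd f ≤ Filter.map Prod.snd (Filter.principal (s ×ˢ t)) :=
          Filter.map_mono hfle
      _ ≤ Filter.principal t := by
          rw [Filter.map_principal]
          exact Filter.principal_mono.mpr (by rintro x ⟨⟨a, b⟩, ⟨ha, hb⟩, rfl⟩; exact hb)
  obtain ⟨x, hx, hxle⟩ := hs _ h1 hle1
  obtain ⟨y, hy, hyle⟩ := ht _ h2 hle2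
  refine ⟨(x, y), ⟨hx, hy⟩, ?_⟩
  rw [nhds_prod_eq]
  exact Filter.le_prod.mpr ⟨hxle, hyle⟩

/-- Corollary 2.1.7 (Aydi et al.'s theorem for not necessarily complete
metric spaces): A ∩ B ≠ ∅ and F has a unique strong coupled fixed point in A ∩ B. -/
theorem stmt_7
    {X : Type*} [MetricSpace X] (A B : Set X) (hA : A.Nonempty) (hB : B.Nonempty)
    (hAcl : IsClosed A) (hBcl : IsClosed B)
    (hAc : IsComplete A) (hBc : IsComplete B)
    (F : X → X → X)
    (hcoupling : ∀ x ∈ A, ∀ y ∈ B, F x y ∈ B ∧ F y x ∈ A)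
    (φ : ℝ → ℝ)
    (hφpos : ∀ t, 0 ≤ t → 0 ≤ φ t)
    (hφmono : ∀ s t, 0 ≤ s → s ≤ t → φ s ≤ φ t)
    (hφlt : ∀ t, 0 < t → φ t < t)
    (hφlim : ∀ t, 0 < t → ∃ L, Filter.Tendsto φ (nhdsWithin t (Set.Ioi t)) (nhds L) ∧ L < t)
    (hcontr : ∀ x ∈ A, ∀ v ∈ A, ∀ y ∈ B, ∀ u ∈ B,
      dist (F x y) (F u v) ≤ φ (max (dist x u) (dist y v))) :
    (A ∩ B).Nonempty ∧ ∃! a, a ∈ A ∩ B ∧ F a a = a := by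
  obtain ⟨a0, ha0⟩ := hA
  obtain ⟨b0, hb0⟩ := hB
  set S : X × X → X × X := fun p => (F p.1 p.2, F p.2 p.1) with hS
  have hSP : ∀ p ∈ A ×ˢ B, S p ∈ B ×ˢ A := by
    rintro ⟨x, y⟩ ⟨hx, hy⟩
    exact ⟨(hcoupling x hx y hy).1, (hcoupling x hx y hy).2⟩
  have hSQ : ∀ q ∈ B ×ˢ A, S q ∈ A ×ˢ B := by
    rintro ⟨u, v⟩ ⟨hu, hv⟩
    exact ⟨(hcoupling v hv u hu).2, (hcoupling v hv u hu).1⟩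
  have hcon : ∀ p ∈ A ×ˢ B, ∀ q ∈ B ×ˢ A, dist (S p) (S q) ≤ φ (dist p q) := by
    rintro ⟨x, y⟩ ⟨hx, hy⟩ ⟨u, v⟩ ⟨hu, hv⟩
    rw [Prod.dist_eq, Prod.dist_eq]
    apply max_le
    · exact hcontr x hx v hv y hy u hu
    · calc dist (F y x) (F v u) = dist (F v u) (F y x) := dist_comm _ _
        _ ≤ φ (max (dist v y) (dist u x)) := hcontr v hv x hx u hu y hy
        _ = φ (max (dist x u) (dist y v)) := by
            rw [dist_comm v y, dist_comm u x, max_comm]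
  obtain ⟨⟨a₁, a₂⟩, ⟨hPmem, hQmem⟩, hfix⟩ :=
    cyclic_aux (isComplete_prod' hAc hBc) (isComplete_prod' hBc hAc) S hSP hSQ φ hφpos hφmono hφlt hφlim hcon
      (p0 := (a0, b0)) ⟨ha0, hb0⟩
  obtain ⟨ha₁A, ha₂B⟩ := hPmem
  obtain ⟨ha₁B, ha₂A⟩ := hQmem
  have hfix1 : F a₁ a₂ = a₁ := congrArg Prod.fst hfix
  have hfix2 : F a₂ a₁ = a₂ := congrArg Prod.snd hfix
  -- a₁ = a₂
  have heq : a₁ = a₂ := by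
    have hq : ((a₂, a₁) : X × X) ∈ B ×ˢ A := ⟨ha₂B, ha₁A⟩
    have := hcon (a₁, a₂) ⟨ha₁A, ha₂B⟩ (a₂, a₁) hq
    have hSp : S (a₁, a₂) = (a₁, a₂) := hfix
    have hSq : S (a₂, a₁) = (a₂, a₁) := by
      simp only [hS]
      exact Prod.ext hfix2 hfix1
    rw [hSp, hSq] at this
    have hdist : dist ((a₁, a₂) : X × X) ((a₂, a₁) : X × X) = dist a₁ a₂ := by
      rw [Prod.dist_eq, dist_comm a₂ a₁, max_self]
    rw [hdist] at this
    rcases eq_or_lt_of_le (dist_nonneg : (0:ℝ) ≤ dist a₁ a₂) with h | h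
    · exact dist_le_zero.mp (le_of_eq h.symm)
    · exact absurd this (not_le.mpr (hφlt _ h))
  subst heq
  have haAB : a₁ ∈ A ∩ B := ⟨ha₁A, ha₁B⟩
  refine ⟨⟨a₁, haAB⟩, a₁, ⟨haAB, hfix1⟩, ?_⟩
  rintro b ⟨⟨hbA, hbB⟩, hbfix⟩
  have := hcontr a₁ ha₁A b hbA a₁ ha₁B b hbB
  rw [hfix1, hbfix, max_self] at this
  rcases eq_or_lt_of_le (dist_nonneg : (0:ℝ) ≤ dist a₁ b) with h | h
  · exact (dist_le_zero.mp (le_of_eq h.symm)).symm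
  · rw [dist_comm] at h
    exact absurd this (not_le.mpr (hφlt _ (by rwa [dist_comm] at h)))
end

section
/- Let A, B be nonempty subsets of a metric space (X,d), T : X → X an SCC-map w.r.t. A, B, and F a φ-contraction type T-coupling w.r.t. A, B. Given x₀ ∈ A, y₀ ∈ B, define sequences by Tx_{n+1} = F(y_n, x_n) and Ty_{n+1} = F(x_n, y_n). Then for the sequence D_n = max{d(Tx_n, Ty_{n+1}), d(Ty_n, Tx_{n+1})}, we have D_n ≤ φ(D_{n-1}) for all n ≥ 1; in particular, if D_{n-1} > 0 then D_n < D_{n-1}. -/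
/-- for D_n = max{d(Tx_n,Ty_{n+1}), d(Ty_n,Tx_{n+1})},
D_n ≤ φ(D_{n-1}) for n ≥ 1, and D_{n-1} > 0 implies D_n < D_{n-1}. -/
theorem stmt_8
    {X : Type*} [MetricSpace X] (A B : Set X) (hA : A.Nonempty) (hB : B.Nonempty)
    (T : X → X)
    (hTA : T '' A ⊆ A) (hTB : T '' B ⊆ B)
    (hTAcl : IsClosed (T '' A)) (hTBcl : IsClosed (T '' B))
    (F : X → X → X)
    (hcoupling : ∀ x ∈ A, ∀ y ∈ B, F x y ∈ B ∧ F y x ∈ A)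
    (φ : ℝ → ℝ)
    (hφpos : ∀ t, 0 ≤ t → 0 ≤ φ t)
    (hφmono : ∀ s t, 0 ≤ s → s ≤ t → φ s ≤ φ t)
    (hφlt : ∀ t, 0 < t → φ t < t)
    (hφlim : ∀ t, 0 < t → ∃ L, Filter.Tendsto φ (nhdsWithin t (Set.Ioi t)) (nhds L) ∧ L < t)
    (hcontr : ∀ x ∈ A, ∀ v ∈ A, ∀ y ∈ B, ∀ u ∈ B,
      dist (F x y) (F u v) ≤ φ (max (dist (T x) (T u)) (dist (T y) (T v))))
    (x y : ℕ → X) (hx : ∀ n, x n ∈ A) (hy : ∀ n, y n ∈ B)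
    (hxrec : ∀ n, T (x (n + 1)) = F (y n) (x n))
    (hyrec : ∀ n, T (y (n + 1)) = F (x n) (y n))
    (D : ℕ → ℝ)
    (hD : ∀ n, D n = max (dist (T (x n)) (T (y (n + 1)))) (dist (T (y n)) (T (x (n + 1))))) :
    ∀ n, D (n + 1) ≤ φ (D n) ∧ (0 < D n → D (n + 1) < D n) := by
  intro n
  have h1 : dist (T (x (n+1))) (T (y (n+2))) ≤ φ (D n) := by
    rw [hxrec, hyrec]
    rw [dist_comm]
    have := hcontr (x (n+1)) (hx _) (x n) (hx _) (y (n+1)) (hy _) (y n) (hy _)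
    calc dist (F (x (n+1)) (y (n+1))) (F (y n) (x n))
        ≤ φ (max (dist (T (x (n+1))) (T (y n))) (dist (T (y (n+1))) (T (x n)))) := this
      _ = φ (D n) := by rw [hD n]; rw [dist_comm (T (x (n+1))), dist_comm (T (y (n+1))), max_comm]
  have h2 : dist (T (y (n+1))) (T (x (n+2))) ≤ φ (D n) := by
    rw [hxrec, hyrec]
    have := hcontr (x n) (hx _) (x (n+1)) (hx _) (y n) (hy _) (y (n+1)) (hy _)
    calc dist (F (x n) (y n)) (F (y (n+1)) (x (n+1)))
        ≤ φ (max (dist (T (x n)) (T (y (n+1)))) (dist (T (y n)) (T (x (n+1))))) := this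
      _ = φ (D n) := by rw [hD n]
  have hmain : D (n+1) ≤ φ (D n) := by
    rw [hD (n+1)]; exact max_le h1 h2
  refine ⟨hmain, fun hpos => lt_of_le_of_lt hmain (hφlt _ hpos)⟩
end

section
/- Under the same setup (F a φ-contraction type T-coupling w.r.t. A, B, sequences with Tx_{n+1} = F(y_n,x_n), Ty_{n+1} = F(x_n,y_n)), the sequence R_n = d(Tx_n, Ty_n) satisfies R_n ≤ φ(R_{n-1}) for all n ≥ 1, and consequently lim_{n→∞} d(Tx_n, Ty_n) = 0. -/
/-- for R_n = d(Tx_n, Ty_n), R_n ≤ φ(R_{n-1}) for n ≥ 1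
and d(Tx_n, Ty_n) → 0. -/
theorem stmt_9
    {X : Type*} [MetricSpace X] (A B : Set X) (hA : A.Nonempty) (hB : B.Nonempty)
    (T : X → X)
    (hTA : T '' A ⊆ A) (hTB : T '' B ⊆ B)
    (hTAcl : IsClosed (T '' A)) (hTBcl : IsClosed (T '' B))
    (F : X → X → X)
    (hcoupling : ∀ x ∈ A, ∀ y ∈ B, F x y ∈ B ∧ F y x ∈ A)
    (φ : ℝ → ℝ)
    (hφpos : ∀ t, 0 ≤ t → 0 ≤ φ t)
    (hφmono : ∀ s t, 0 ≤ s → s ≤ t → φ s ≤ φ t)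
    (hφlt : ∀ t, 0 < t → φ t < t)
    (hφlim : ∀ t, 0 < t → ∃ L, Filter.Tendsto φ (nhdsWithin t (Set.Ioi t)) (nhds L) ∧ L < t)
    (hcontr : ∀ x ∈ A, ∀ v ∈ A, ∀ y ∈ B, ∀ u ∈ B,
      dist (F x y) (F u v) ≤ φ (max (dist (T x) (T u)) (dist (T y) (T v))))
    (x y : ℕ → X) (hx : ∀ n, x n ∈ A) (hy : ∀ n, y n ∈ B)
    (hxrec : ∀ n, T (x (n + 1)) = F (y n) (x n))
    (hyrec : ∀ n, T (y (n + 1)) = F (x n) (y n))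
    (R : ℕ → ℝ) (hR : ∀ n, R n = dist (T (x n)) (T (y n))) :
    (∀ n, R (n + 1) ≤ φ (R n)) ∧
      Filter.Tendsto (fun n => dist (T (x n)) (T (y n))) Filter.atTop (nhds 0) := by
  have hφ0 : φ 0 = 0 := by
    refine le_antisymm ?_ (hφpos 0 le_rfl)
    by_contra h
    push_neg at h
    have := lt_of_le_of_lt (hφmono 0 (φ 0) le_rfl h.le) (hφlt _ h)
    exact lt_irrefl _ this
  have h1 : ∀ n, R (n + 1) ≤ φ (R n) := by
    intro n
    have hc := hcontr (x n) (hx n) (x n) (hx n) (y n) (hy n) (y n) (hy n)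
    have heq : R (n + 1) = dist (F (x n) (y n)) (F (y n) (x n)) := by
      rw [hR, hxrec, hyrec, dist_comm]
    rw [heq, hR]
    calc dist (F (x n) (y n)) (F (y n) (x n))
        ≤ φ (max (dist (T (x n)) (T (y n))) (dist (T (y n)) (T (x n)))) := hc
      _ = φ (dist (T (x n)) (T (y n))) := by rw [dist_comm (T (y n)), max_self]
  refine ⟨h1, ?_⟩
  have hRn : ∀ n, 0 ≤ R n := fun n => by rw [hR]; exact dist_nonneg
  have hφR : ∀ n, φ (R n) ≤ R n := by
    intro n
    rcases eq_or_lt_of_le (hRn n) with h | h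
    · rw [← h, hφ0]
    · exact (hφlt _ h).le
  have hanti : Antitone R :=
    antitone_nat_of_succ_le (fun n => (h1 n).trans (hφR n))
  have hbdd : BddBelow (Set.range R) := ⟨0, by rintro _ ⟨n, rfl⟩; exact hRn n⟩
  set L := ⨅ n, R n with hL
  have htend : Filter.Tendsto R Filter.atTop (nhds L) :=
    tendsto_atTop_ciInf hanti hbdd
  have hLle : ∀ n, L ≤ R n := fun n => ciInf_le hbdd n
  have hL0 : 0 ≤ L := le_ciInf hRn
  have hLzero : L = 0 := by
    by_contra hne
    have hLpos : 0 < L := lt_of_le_of_ne hL0 (Ne.symm hne)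
    have hlt : ∀ n, L < R n := by
      intro n
      rcases eq_or_lt_of_le (hLle n) with h | h
      · exfalso
        have h2 : R (n + 1) ≤ φ L := by rw [h]; exact h1 n
        have := lt_of_le_of_lt h2 (hφlt _ hLpos)
        exact absurd (hLle (n + 1)) (not_le.mpr this)
      · exact h
    obtain ⟨L', hL'tend, hL'lt⟩ := hφlim L hLpos
    have htendW : Filter.Tendsto R Filter.atTop (nhdsWithin L (Set.Ioi L)) := by
      rw [tendsto_nhdsWithin_iff]
      exact ⟨htend, Filter.Eventually.of_forall hlt⟩
    have hφtend : Filter.Tendsto (fun n => φ (R n)) Filter.atTop (nhds L') :=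
      hL'tend.comp htendW
    have htend' : Filter.Tendsto (fun n => R (n + 1)) Filter.atTop (nhds L) :=
      htend.comp (Filter.tendsto_add_atTop_nat 1)
    have : L ≤ L' := le_of_tendsto_of_tendsto' htend' hφtend h1
    exact absurd this (not_le.mpr hL'lt)
  have : (fun n => dist (T (x n)) (T (y n))) = R := by
    funext n; rw [hR]
  rw [this, ← hLzero]
  exact htend
end

section
/- Let A, B be nonempty closed subsets of a complete metric space (X,d) and F : X × X → X a (φ,ψ)-contraction type coupling with respect to A and B: ψ(d(F(x,y), F(u,v))) ≤ ψ(max{d(x,u), d(y,v)}) − φ(max{d(x,u), d(y,v)}) for all x, v ∈ A and y, u ∈ B, where φ, ψ are altering distance functions. Then A ∩ B ≠ ∅. -/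
/-- Theorem 2.2.2 (i): A ∩ B ≠ ∅. -/
theorem stmt_10
    {X : Type*} [MetricSpace X] [CompleteSpace X]
    (A B : Set X) (hA : A.Nonempty) (hB : B.Nonempty)
    (hAcl : IsClosed A) (hBcl : IsClosed B)
    (F : X → X → X)
    (hcoupling : ∀ x ∈ A, ∀ y ∈ B, F x y ∈ B ∧ F y x ∈ A)
    (φ ψ : ℝ → ℝ)
    (hφ0 : ∀ t, 0 ≤ t → 0 ≤ φ t) (hψ0 : ∀ t, 0 ≤ t → 0 ≤ ψ t)
    (hφc : ContinuousOn φ (Set.Ici 0)) (hψc : ContinuousOn ψ (Set.Ici 0))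
    (hφm : ∀ s t, 0 ≤ s → s ≤ t → φ s ≤ φ t) (hψm : ∀ s t, 0 ≤ s → s ≤ t → ψ s ≤ ψ t)
    (hφz : ∀ t, 0 ≤ t → (φ t = 0 ↔ t = 0)) (hψz : ∀ t, 0 ≤ t → (ψ t = 0 ↔ t = 0))
    (hcontr : ∀ x ∈ A, ∀ v ∈ A, ∀ y ∈ B, ∀ u ∈ B,
      ψ (dist (F x y) (F u v)) ≤
        ψ (max (dist x u) (dist y v)) - φ (max (dist x u) (dist y v))) :
    (A ∩ B).Nonempty := by
  classical
  obtain ⟨x0, hx0⟩ := hA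
  obtain ⟨y0, hy0⟩ := hB
  -- the iterated coupled sequences
  obtain ⟨a, b, ha0, hb0, hstep⟩ :
      ∃ a b : ℕ → X, a 0 = x0 ∧ b 0 = y0 ∧
        ∀ n, a (n+1) = F (b n) (a n) ∧ b (n+1) = F (a n) (b n) := by
    refine ⟨fun n => (Nat.rec (x0, y0)
        (fun _ q => (F q.2 q.1, F q.1 q.2)) n : X × X).1,
      fun n => (Nat.rec (x0, y0)
        (fun _ q => (F q.2 q.1, F q.1 q.2)) n : X × X).2, rfl, rfl, fun n => ⟨rfl, rfl⟩⟩
  have hmem : ∀ n, a n ∈ A ∧ b n ∈ B := by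
    intro n
    induction n with
    | zero => exact ⟨ha0 ▸ hx0, hb0 ▸ hy0⟩
    | succ n ih =>
      refine ⟨(hstep n).1 ▸ (hcoupling _ ih.1 _ ih.2).2,
        (hstep n).2 ▸ (hcoupling _ ih.1 _ ih.2).1⟩
  -- cross distances
  obtain ⟨s, hs⟩ : ∃ s : ℕ → ℕ → ℝ, ∀ n m,
      s n m = max (dist (a n) (b m)) (dist (b n) (a m)) := ⟨_, fun _ _ => rfl⟩
  have hs0 : ∀ n m, 0 ≤ s n m := by
    intro n m; rw [hs]; exact le_trans dist_nonneg (le_max_left _ _)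
  have hsym : ∀ n m, s n m = s m n := by
    intro n m; rw [hs, hs, dist_comm (a n), dist_comm (b n), max_comm]
  have hsnn : ∀ n, s n n = dist (a n) (b n) := by
    intro n; rw [hs, dist_comm (b n), max_self]
  -- key contraction inequality on cross distances
  have key : ∀ n m, ψ (s (n+1) (m+1)) ≤ ψ (s n m) - φ (s n m) := by
    intro n m
    have h1 := hcontr (a m) (hmem m).1 (a n) (hmem n).1 (b m) (hmem m).2 (b n) (hmem n).2
    have h2 := hcontr (a n) (hmem n).1 (a m) (hmem m).1 (b n) (hmem n).2 (b m) (hmem m).2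
    have e2 : max (dist (a m) (b n)) (dist (b m) (a n)) = s n m := by
      rw [hs, dist_comm (a m), dist_comm (b m), max_comm]
    have e3 : max (dist (a n) (b m)) (dist (b n) (a m)) = s n m := (hs n m).symm
    rw [e2] at h1
    rw [e3] at h2
    have h1' : ψ (dist (a (n+1)) (b (m+1))) ≤ ψ (s n m) - φ (s n m) := by
      rw [(hstep n).1, (hstep m).2, dist_comm]; exact h1
    have h2' : ψ (dist (b (n+1)) (a (m+1))) ≤ ψ (s n m) - φ (s n m) := by
      rw [(hstep n).2, (hstep m).1]; exact h2
    rcases max_choice (dist (a (n+1)) (b (m+1))) (dist (b (n+1)) (a (m+1))) with h | h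
    · rw [hs, h]; exact h1'
    · rw [hs, h]; exact h2'
  -- general lemma: sequences satisfying the (ψ,φ) recursion tend to 0
  have keyL : ∀ v : ℕ → ℝ, (∀ n, 0 ≤ v n) →
      (∀ n, ψ (v (n+1)) ≤ ψ (v n) - φ (v n)) →
      Filter.Tendsto v Filter.atTop (nhds 0) := by
    intro v hv hvk
    have hg : ∀ n, ψ (v (n+1)) ≤ ψ (v n) := fun n =>
      (hvk n).trans (by linarith [hφ0 _ (hv n)])
    have hanti : Antitone fun n => ψ (v n) := antitone_nat_of_succ_le hg
    have hbdd : BddBelow (Set.range fun n => ψ (v n)) := by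
      refine ⟨0, ?_⟩; rintro x ⟨n, rfl⟩; exact hψ0 _ (hv n)
    have hlim := tendsto_atTop_ciInf hanti hbdd
    have hφlim : Filter.Tendsto (fun n => φ (v n)) Filter.atTop (nhds 0) := by
      have h1 : Filter.Tendsto (fun n => ψ (v n) - ψ (v (n+1)))
          Filter.atTop (nhds 0) := by
        have := hlim.sub (hlim.comp (Filter.tendsto_add_atTop_nat 1))
        simpa using this
      exact squeeze_zero (fun n => hφ0 _ (hv n)) (fun n => by linarith [hvk n]) h1
    rw [Metric.tendsto_atTop]
    intro ε hε
    have hφε : 0 < φ ε :=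
      lt_of_le_of_ne (hφ0 _ hε.le) fun h => hε.ne' ((hφz ε hε.le).1 h.symm)
    obtain ⟨N, hN⟩ := Metric.tendsto_atTop.mp hφlim (φ ε) hφε
    refine ⟨N, fun n hn => ?_⟩
    have h := hN n hn
    rw [Real.dist_eq, sub_zero, abs_of_nonneg (hφ0 _ (hv n))] at h
    rw [Real.dist_eq, sub_zero, abs_of_nonneg (hv n)]
    by_contra hcon
    push_neg at hcon
    exact absurd (hφm ε (v n) hε.le hcon) (not_le.mpr h)
  -- diagonal and near-diagonal distances tend to 0
  have hr_lim : Filter.Tendsto (fun n => s n n) Filter.atTop (nhds 0) :=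
    keyL _ (fun n => hs0 n n) (fun n => key n n)
  have hu_lim : Filter.Tendsto (fun n => s (n+1) n) Filter.atTop (nhds 0) :=
    keyL _ (fun n => hs0 (n+1) n) (fun n => key (n+1) n)
  -- E n bounds the steps of both sequences
  obtain ⟨E, hEdef⟩ : ∃ E : ℕ → ℝ, ∀ n, E n = s n n + s (n+1) n := ⟨_, fun _ => rfl⟩
  have hE_lim : Filter.Tendsto E Filter.atTop (nhds 0) := by
    have := hr_lim.add hu_lim
    simp only [add_zero] at this
    simpa [hEdef] using (funext hEdef ▸ this)
  have hE0 : ∀ n, 0 ≤ E n := fun n => by rw [hEdef]; exact add_nonneg (hs0 n n) (hs0 (n+1) n)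
  have haa : ∀ n, dist (a n) (a (n+1)) ≤ E n := by
    intro n
    have h1 : dist (a n) (a (n+1)) ≤ dist (a n) (b n) + dist (b n) (a (n+1)) :=
      dist_triangle _ _ _
    have h2 : dist (b n) (a (n+1)) ≤ s (n+1) n := by
      rw [hs, dist_comm]; exact le_max_left _ _
    rw [hEdef, hsnn]; linarith
  have hbb : ∀ n, dist (b n) (b (n+1)) ≤ E n := by
    intro n
    have h1 : dist (b n) (b (n+1)) ≤ dist (b n) (a n) + dist (a n) (b (n+1)) :=
      dist_triangle _ _ _
    have h2 : dist (a n) (b (n+1)) ≤ s (n+1) n := by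
      rw [hs, dist_comm]; exact le_max_right _ _
    rw [hEdef, hsnn]
    rw [dist_comm (b n) (a n)] at h1; linarith
  -- triangle estimates for s
  have hT1 : ∀ n m, s n (m+1) ≤ s n m + E m := by
    intro n m
    rw [hs]
    refine max_le ?_ ?_
    · calc dist (a n) (b (m+1)) ≤ dist (a n) (b m) + dist (b m) (b (m+1)) :=
            dist_triangle _ _ _
        _ ≤ s n m + E m := by
            have := hbb m
            have h2 : dist (a n) (b m) ≤ s n m := by rw [hs]; exact le_max_left _ _
            linarith
    · calc dist (b n) (a (m+1)) ≤ dist (b n) (a m) + dist (a m) (a (m+1)) :=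
            dist_triangle _ _ _
        _ ≤ s n m + E m := by
            have := haa m
            have h2 : dist (b n) (a m) ≤ s n m := by rw [hs]; exact le_max_right _ _
            linarith
  have hT2 : ∀ n m, s (n+1) m ≤ s n m + E n := by
    intro n m
    have := hT1 m n
    rw [hsym n m, hsym (n+1) m]; exact this
  have hT1' : ∀ n m, s n m ≤ s n (m+1) + E m := by
    intro n m
    rw [hs]
    refine max_le ?_ ?_
    · calc dist (a n) (b m) ≤ dist (a n) (b (m+1)) + dist (b (m+1)) (b m) :=
            dist_triangle _ _ _
        _ ≤ s n (m+1) + E m := by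
            have h1 := hbb m
            rw [dist_comm (b (m+1)) (b m)]
            have h2 : dist (a n) (b (m+1)) ≤ s n (m+1) := by
              rw [hs]; exact le_max_left _ _
            linarith
    · calc dist (b n) (a m) ≤ dist (b n) (a (m+1)) + dist (a (m+1)) (a m) :=
            dist_triangle _ _ _
        _ ≤ s n (m+1) + E m := by
            have h1 := haa m
            rw [dist_comm (a (m+1)) (a m)]
            have h2 : dist (b n) (a (m+1)) ≤ s n (m+1) := by
              rw [hs]; exact le_max_right _ _
            linarith
  have hT2' : ∀ n m, s n m ≤ s (n+1) m + E n := by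
    intro n m
    have := hT1' m n
    rw [hsym n m, hsym (n+1) m] at *; exact this
  -- main claim: s n m → 0 uniformly
  have claim : ∀ ε : ℝ, 0 < ε → ∃ N, ∀ n, N ≤ n → ∀ m, N ≤ m → s n m < ε := by
    by_contra hc
    push_neg at hc
    obtain ⟨ε, hε, hcc⟩ := hc
    have H : ∀ N, ∃ n m, N ≤ n ∧ n ≤ m ∧ ε ≤ s n m := by
      intro N
      obtain ⟨n, hn, m, hm, hsnm⟩ := hcc N
      rcases le_total n m with h | h
      · exact ⟨n, m, hn, h, hsnm⟩
      · exact ⟨m, n, hm, h, by rwa [hsym]⟩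
    obtain ⟨K, hK⟩ := Metric.tendsto_atTop.mp hr_lim ε hε
    have hKr : ∀ j, K ≤ j → s j j < ε := by
      intro j hj
      have := hK j hj
      rwa [Real.dist_eq, sub_zero, abs_of_nonneg (hs0 j j)] at this
    have exNM : ∀ k, ∃ n m, k ≤ n ∧ K ≤ n ∧ 1 ≤ n ∧ n < m ∧ ε ≤ s n m ∧ s n (m-1) < ε := by
      intro k
      obtain ⟨n, m, hn, hnm, hsnm⟩ := H (max k K + 1)
      have hnk : k ≤ n := le_trans (le_trans (le_max_left _ _) (Nat.le_succ _)) hn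
      have hnK : K ≤ n := le_trans (le_trans (le_max_right _ _) (Nat.le_succ _)) hn
      have hn1 : 1 ≤ n := le_trans (Nat.le_add_left 1 _) hn
      have hlt : n < m := by
        rcases lt_or_eq_of_le hnm with h | h
        · exact h
        · exact absurd hsnm (by rw [← h]; exact not_le.mpr (hKr n hnK))
      have hp : ∃ j, n < j ∧ ε ≤ s n j := ⟨m, hlt, hsnm⟩
      refine ⟨n, Nat.find hp, hnk, hnK, hn1, (Nat.find_spec hp).1, (Nat.find_spec hp).2, ?_⟩
      rcases Nat.lt_or_ge n (Nat.find hp - 1) with h | h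
      · by_contra hcon
        push_neg at hcon
        have hless : Nat.find hp - 1 < Nat.find hp :=
          Nat.sub_lt (Nat.lt_of_le_of_lt (Nat.zero_le n) (Nat.find_spec hp).1) one_pos
        exact Nat.find_min hp hless ⟨h, hcon⟩
      · have : Nat.find hp - 1 = n :=
          le_antisymm h (Nat.le_sub_one_of_lt (Nat.find_spec hp).1)
        rw [this]; exact hKr n hnK
    choose nf mf hk1 hk2 hk3 hk4 hk5 hk6 using exNM
    have hmf1 : ∀ k, 1 ≤ mf k := fun k => le_trans (hk3 k) (le_of_lt (hk4 k))
    have hm_succ : ∀ k, mf k - 1 + 1 = mf k := fun k =>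
      Nat.succ_pred_eq_of_pos (hmf1 k)
    have hn_succ : ∀ k, nf k - 1 + 1 = nf k := fun k =>
      Nat.succ_pred_eq_of_pos (hk3 k)
    have hnf_top : Filter.Tendsto nf Filter.atTop Filter.atTop :=
      Filter.tendsto_atTop_mono hk1 Filter.tendsto_id
    have hm1_top : Filter.Tendsto (fun k => mf k - 1) Filter.atTop Filter.atTop := by
      refine Filter.tendsto_atTop_mono (fun k => ?_) Filter.tendsto_id
      exact le_trans (hk1 k) (Nat.le_sub_one_of_lt (lt_of_le_of_lt (le_refl _) (hk4 k)))
    have hn1_top : Filter.Tendsto (fun k => nf k - 1) Filter.atTop Filter.atTop := by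
      refine Filter.tendsto_atTop_mono (fun k => Nat.sub_le_sub_right (hk1 k) 1) ?_
      exact Filter.tendsto_sub_atTop_nat 1
    have hE1 : Filter.Tendsto (fun k => E (mf k - 1)) Filter.atTop (nhds 0) :=
      hE_lim.comp hm1_top
    have hE2 : Filter.Tendsto (fun k => E (nf k - 1)) Filter.atTop (nhds 0) :=
      hE_lim.comp hn1_top
    -- s (nf k) (mf k) → ε
    have hS_ub : ∀ k, s (nf k) (mf k) ≤ ε + E (mf k - 1) := by
      intro k
      have h := hT1 (nf k) (mf k - 1)
      rw [hm_succ k] at h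
      linarith [hk6 k]
    have hS_lim : Filter.Tendsto (fun k => s (nf k) (mf k)) Filter.atTop (nhds ε) := by
      refine tendsto_of_tendsto_of_tendsto_of_le_of_le tendsto_const_nhds ?_
        (fun k => hk5 k) hS_ub
      have := (tendsto_const_nhds :
        Filter.Tendsto (fun _ : ℕ => ε) Filter.atTop (nhds ε)).add hE1
      simpa using this
    -- t k := s (nf k - 1) (mf k - 1) → ε
    have ht_ub : ∀ k, s (nf k - 1) (mf k - 1) ≤ ε + E (nf k - 1) := by
      intro k
      have h := hT2' (nf k - 1) (mf k - 1)
      rw [hn_succ k] at h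
      linarith [hk6 k]
    have ht_lb : ∀ k, ε - E (nf k - 1) - E (mf k - 1) ≤ s (nf k - 1) (mf k - 1) := by
      intro k
      have h1 := hT2 (nf k - 1) (mf k)
      rw [hn_succ k] at h1
      have h2 := hT1 (nf k - 1) (mf k - 1)
      rw [hm_succ k] at h2
      linarith [hk5 k]
    have ht_lim : Filter.Tendsto (fun k => s (nf k - 1) (mf k - 1))
        Filter.atTop (nhds ε) := by
      refine tendsto_of_tendsto_of_tendsto_of_le_of_le ?_ ?_ ht_lb ht_ub
      · have := ((tendsto_const_nhds :
          Filter.Tendsto (fun _ : ℕ => ε) Filter.atTop (nhds ε)).sub hE2).sub hE1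
        simpa using this
      · have := (tendsto_const_nhds :
          Filter.Tendsto (fun _ : ℕ => ε) Filter.atTop (nhds ε)).add hE2
        simpa using this
    have hkey2 : ∀ k, ψ ε ≤ ψ (s (nf k - 1) (mf k - 1)) - φ (s (nf k - 1) (mf k - 1)) := by
      intro k
      have h := key (nf k - 1) (mf k - 1)
      rw [hn_succ k, hm_succ k] at h
      exact le_trans (hψm ε _ hε.le (hk5 k)) h
    have htmem : Filter.Tendsto (fun k => s (nf k - 1) (mf k - 1)) Filter.atTop
        (nhdsWithin ε (Set.Ici 0)) :=
      tendsto_nhdsWithin_iff.mpr ⟨ht_lim, Filter.Eventually.of_forall fun k => hs0 _ _⟩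
    have hψt : Filter.Tendsto (fun k => ψ (s (nf k - 1) (mf k - 1)))
        Filter.atTop (nhds (ψ ε)) :=
      (hψc.continuousWithinAt (Set.mem_Ici.mpr hε.le)).tendsto.comp htmem
    have hφt : Filter.Tendsto (fun k => φ (s (nf k - 1) (mf k - 1)))
        Filter.atTop (nhds (φ ε)) :=
      (hφc.continuousWithinAt (Set.mem_Ici.mpr hε.le)).tendsto.comp htmem
    have hfin : ψ ε ≤ ψ ε - φ ε :=
      ge_of_tendsto (hψt.sub hφt) (Filter.Eventually.of_forall hkey2)
    have hφε0 : φ ε = 0 := le_antisymm (by linarith) (hφ0 ε hε.le)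
    exact hε.ne' ((hφz ε hε.le).1 hφε0)
  -- a is Cauchy
  have hca : CauchySeq a := by
    rw [Metric.cauchySeq_iff]
    intro ε hε
    obtain ⟨N1, hN1⟩ := claim (ε/2) (by linarith)
    obtain ⟨N2, hN2⟩ := Metric.tendsto_atTop.mp hr_lim (ε/2) (by linarith)
    refine ⟨max N1 N2, fun m hm n hn => ?_⟩
    have h1 : dist (a m) (a n) ≤ dist (a m) (b m) + dist (b m) (a n) :=
      dist_triangle _ _ _
    have h2 : dist (a m) (b m) ≤ s m m := by rw [hsnn]
    have h3 : dist (b m) (a n) ≤ s m n := by rw [hs]; exact le_max_right _ _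
    have h4 : s m n < ε/2 :=
      hN1 m (le_trans (le_max_left _ _) hm) n (le_trans (le_max_left _ _) hn)
    have h5 : s m m < ε/2 := by
      have := hN2 m (le_trans (le_max_right _ _) hm)
      rwa [Real.dist_eq, sub_zero, abs_of_nonneg (hs0 m m)] at this
    linarith
  obtain ⟨q, hq⟩ := cauchySeq_tendsto_of_complete hca
  have hb_lim : Filter.Tendsto b Filter.atTop (nhds q) := by
    rw [tendsto_iff_dist_tendsto_zero]
    refine squeeze_zero (fun n => dist_nonneg) (g := fun n => s n n + dist (a n) q)
      (fun n => ?_) ?_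
    · have h1 : dist (b n) q ≤ dist (b n) (a n) + dist (a n) q := dist_triangle _ _ _
      have h2 : dist (b n) (a n) ≤ s n n := by rw [hsnn, dist_comm]
      show dist (b n) q ≤ s n n + dist (a n) q
      linarith
    · have := hr_lim.add (tendsto_iff_dist_tendsto_zero.mp hq)
      simpa using this
  exact ⟨q, hAcl.mem_of_tendsto hq (Filter.Eventually.of_forall fun n => (hmem n).1),
    hBcl.mem_of_tendsto hb_lim (Filter.Eventually.of_forall fun n => (hmem n).2)⟩
end

section
/- Let A, B be nonempty closed subsets of a complete metric space (X,d) and F : X × X → X a (φ,ψ)-contraction type coupling with respect to A and B (with φ, ψ altering distance functions). Then F has a strong coupled fixed point in A ∩ B, i.e. there exists x ∈ A ∩ B with F(x,x) = x. -/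
/-- Theorem 2.2.2 (existence): F has a strong coupled fixed point in A ∩ B. -/
theorem stmt_11
    {X : Type*} [MetricSpace X] [CompleteSpace X]
    (A B : Set X) (hA : A.Nonempty) (hB : B.Nonempty)
    (hAcl : IsClosed A) (hBcl : IsClosed B)
    (F : X → X → X)
    (hcoupling : ∀ x ∈ A, ∀ y ∈ B, F x y ∈ B ∧ F y x ∈ A)
    (φ ψ : ℝ → ℝ)
    (hφ0 : ∀ t, 0 ≤ t → 0 ≤ φ t) (hψ0 : ∀ t, 0 ≤ t → 0 ≤ ψ t)
    (hφc : ContinuousOn φ (Set.Ici 0)) (hψc : ContinuousOn ψ (Set.Ici 0))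
    (hφm : ∀ s t, 0 ≤ s → s ≤ t → φ s ≤ φ t) (hψm : ∀ s t, 0 ≤ s → s ≤ t → ψ s ≤ ψ t)
    (hφz : ∀ t, 0 ≤ t → (φ t = 0 ↔ t = 0)) (hψz : ∀ t, 0 ≤ t → (ψ t = 0 ↔ t = 0))
    (hcontr : ∀ x ∈ A, ∀ v ∈ A, ∀ y ∈ B, ∀ u ∈ B,
      ψ (dist (F x y) (F u v)) ≤
        ψ (max (dist x u) (dist y v)) - φ (max (dist x u) (dist y v))) :
    ∃ x ∈ A ∩ B, F x x = x := by
  classical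
  obtain ⟨x0, hx0⟩ := hA
  obtain ⟨y0, hy0⟩ := hB
  -- positivity facts
  have hφpos : ∀ t, 0 < t → 0 < φ t := by
    intro t ht
    rcases lt_or_eq_of_le (hφ0 t ht.le) with h | h
    · exact h
    · exact absurd ((hφz t ht.le).mp h.symm) ht.ne'
  have hψpos : ∀ t, 0 < t → 0 < ψ t := by
    intro t ht
    rcases lt_or_eq_of_le (hψ0 t ht.le) with h | h
    · exact h
    · exact absurd ((hψz t ht.le).mp h.symm) ht.ne'
  -- the iterated sequence
  set G : X × X → X × X := fun p => (F p.2 p.1, F p.1 p.2) with hGdef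
  set x : ℕ → X := fun n => (G^[n] (x0, y0)).1 with hxdef
  set y : ℕ → X := fun n => (G^[n] (x0, y0)).2 with hydef
  have hstep : ∀ n, x (n + 1) = F (y n) (x n) ∧ y (n + 1) = F (x n) (y n) := by
    intro n
    have h : G^[n + 1] (x0, y0) = G (G^[n] (x0, y0)) := Function.iterate_succ_apply' G n _
    constructor
    · show (G^[n + 1] (x0, y0)).1 = F (y n) (x n)
      rw [h]
    · show (G^[n + 1] (x0, y0)).2 = F (x n) (y n)
      rw [h]
  have hmem : ∀ n, x n ∈ A ∧ y n ∈ B := by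
    intro n
    induction n with
    | zero => exact ⟨hx0, hy0⟩
    | succ n ih =>
      rw [(hstep n).1, (hstep n).2]
      exact ⟨(hcoupling _ ih.1 _ ih.2).2, (hcoupling _ ih.1 _ ih.2).1⟩
  -- the mixed distance
  set D : ℕ → ℕ → ℝ := fun m n => max (dist (x m) (y n)) (dist (y m) (x n)) with hDdef
  have hD0 : ∀ m n, 0 ≤ D m n := fun m n => le_trans dist_nonneg (le_max_left _ _)
  have hDsymm : ∀ m n, D m n = D n m := by
    intro m n
    simp only [hDdef]
    rw [dist_comm (x m) (y n), dist_comm (y m) (x n), max_comm]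
  -- the key contraction inequality
  have key : ∀ m n, ψ (D (m + 1) (n + 1)) ≤ ψ (D m n) - φ (D m n) := by
    intro m n
    have h1 : ψ (dist (x (m + 1)) (y (n + 1))) ≤ ψ (D m n) - φ (D m n) := by
      rw [(hstep m).1, (hstep n).2, dist_comm]
      have h := hcontr (x n) (hmem n).1 (x m) (hmem m).1 (y n) (hmem n).2 (y m) (hmem m).2
      have heq : max (dist (x n) (y m)) (dist (y n) (x m)) = D m n := by
        simp only [hDdef]
        rw [dist_comm (x n) (y m), dist_comm (y n) (x m), max_comm]
      rwa [heq] at h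
    have h2 : ψ (dist (y (m + 1)) (x (n + 1))) ≤ ψ (D m n) - φ (D m n) := by
      rw [(hstep m).2, (hstep n).1]
      exact hcontr (x m) (hmem m).1 (x n) (hmem n).1 (y m) (hmem m).2 (y n) (hmem n).2
    rcases max_cases (dist (x (m + 1)) (y (n + 1))) (dist (y (m + 1)) (x (n + 1))) with
      ⟨h, _⟩ | ⟨h, _⟩
    · show ψ (max _ _) ≤ _; rw [h]; exact h1
    · show ψ (max _ _) ≤ _; rw [h]; exact h2
  -- generic convergence lemma
  have hTend : ∀ u : ℕ → ℝ, (∀ n, 0 ≤ u n) → (∀ n, ψ (u (n + 1)) ≤ ψ (u n) - φ (u n)) →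
      Filter.Tendsto u Filter.atTop (nhds 0) := by
    intro u hu hrec
    have ha : ∀ n, ψ (u (n + 1)) ≤ ψ (u n) := fun n =>
      (hrec n).trans (sub_le_self _ (hφ0 _ (hu n)))
    have hanti : Antitone fun n => ψ (u n) := antitone_nat_of_succ_le ha
    have hbdd : BddBelow (Set.range fun n => ψ (u n)) := by
      refine ⟨0, ?_⟩
      rintro _ ⟨n, rfl⟩
      exact hψ0 _ (hu n)
    have hconv : Filter.Tendsto (fun n => ψ (u n)) Filter.atTop (nhds (⨅ n, ψ (u n))) :=
      tendsto_atTop_ciInf hanti hbdd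
    have hφ0' : Filter.Tendsto (fun n => φ (u n)) Filter.atTop (nhds 0) := by
      have hsq : ∀ n, φ (u n) ≤ ψ (u n) - ψ (u (n + 1)) := fun n => by linarith [hrec n]
      have hdiff : Filter.Tendsto (fun n => ψ (u n) - ψ (u (n + 1))) Filter.atTop (nhds 0) := by
        have h2 := hconv.sub (hconv.comp (Filter.tendsto_add_atTop_nat 1))
        simpa using h2
      exact squeeze_zero (fun n => hφ0 _ (hu n)) hsq hdiff
    rw [Metric.tendsto_atTop]
    intro ε hε
    by_contra hcon
    push_neg at hcon
    have hfreq : ∃ᶠ n in Filter.atTop, φ ε ≤ φ (u n) := by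
      rw [Filter.frequently_atTop]
      intro N
      obtain ⟨n, hn, hd⟩ := hcon N
      refine ⟨n, hn, ?_⟩
      have : ε ≤ u n := by
        have habs : |u n| = u n := abs_of_nonneg (hu n)
        rw [Real.dist_eq, sub_zero, habs] at hd
        exact hd
      exact hφm ε (u n) hε.le this
    have hev : ∀ᶠ n in Filter.atTop, φ (u n) < φ ε :=
      hφ0'.eventually (gt_mem_nhds (hφpos ε hε))
    obtain ⟨n, h1, h2⟩ := (hfreq.and_eventually hev).exists
    linarith
  have hd : Filter.Tendsto (fun n => D n n) Filter.atTop (nhds 0) :=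
    hTend _ (fun n => hD0 n n) fun n => key n n
  have hp : Filter.Tendsto (fun n => D (n + 1) n) Filter.atTop (nhds 0) :=
    hTend _ (fun n => hD0 _ _) fun n => key (n + 1) n
  -- consecutive step bounds
  have hstepx : ∀ n, dist (x n) (x (n + 1)) ≤ D n n + D (n + 1) n := by
    intro n
    have h1 : dist (x n) (y n) ≤ D n n := le_max_left _ _
    have h2 : dist (y n) (x (n + 1)) ≤ D (n + 1) n := by
      rw [dist_comm]; exact le_max_left _ _
    calc dist (x n) (x (n + 1)) ≤ dist (x n) (y n) + dist (y n) (x (n + 1)) := dist_triangle _ _ _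
      _ ≤ D n n + D (n + 1) n := add_le_add h1 h2
  have hstepy : ∀ n, dist (y n) (y (n + 1)) ≤ D n n + D (n + 1) n := by
    intro n
    have h1 : dist (y n) (x n) ≤ D n n := le_max_right _ _
    have h2 : dist (x n) (y (n + 1)) ≤ D (n + 1) n := by
      rw [dist_comm]; exact le_max_right _ _
    calc dist (y n) (y (n + 1)) ≤ dist (y n) (x n) + dist (x n) (y (n + 1)) := dist_triangle _ _ _
      _ ≤ D n n + D (n + 1) n := add_le_add h1 h2
  -- Lipschitz-type bound for D
  have hlip : ∀ m n m' n', D m n ≤ D m' n' + dist (x m) (x m') + dist (y m) (y m')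
      + dist (x n) (x n') + dist (y n) (y n') := by
    intro m n m' n'
    have e1 : dist (x m) (y n) ≤ dist (x m) (x m') + dist (x m') (y n') + dist (y n') (y n) := by
      calc dist (x m) (y n) ≤ dist (x m) (y n') + dist (y n') (y n) := dist_triangle _ _ _
        _ ≤ dist (x m) (x m') + dist (x m') (y n') + dist (y n') (y n) := by
            have := dist_triangle (x m) (x m') (y n'); linarith
    have e2 : dist (y m) (x n) ≤ dist (y m) (y m') + dist (y m') (x n') + dist (x n') (x n) := by
      calc dist (y m) (x n) ≤ dist (y m) (x n') + dist (x n') (x n) := dist_triangle _ _ _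
        _ ≤ dist (y m) (y m') + dist (y m') (x n') + dist (x n') (x n) := by
            have := dist_triangle (y m) (y m') (x n'); linarith
    have f1 : dist (x m') (y n') ≤ D m' n' := le_max_left _ _
    have f2 : dist (y m') (x n') ≤ D m' n' := le_max_right _ _
    have g1 : dist (y n') (y n) = dist (y n) (y n') := dist_comm _ _
    have g2 : dist (x n') (x n) = dist (x n) (x n') := dist_comm _ _
    apply max_le
    · have h5 : (0:ℝ) ≤ dist (y m) (y m') := dist_nonneg
      have h6 : (0:ℝ) ≤ dist (x n) (x n') := dist_nonneg
      linarith
    · have h5 : (0:ℝ) ≤ dist (x m) (x m') := dist_nonneg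
      have h6 : (0:ℝ) ≤ dist (y n) (y n') := dist_nonneg
      linarith
  -- uniform smallness of D
  have huniform : ∀ ε : ℝ, 0 < ε → ∃ N, ∀ m ≥ N, ∀ n ≥ N, D m n < ε := by
    by_contra hcon
    push_neg at hcon
    obtain ⟨ε, hε, hbad⟩ := hcon
    have hclaim : ∀ δ : ℝ, 0 < δ → ψ ε + φ (ε / 2) ≤ ψ (ε + δ) := by
      intro δ hδ
      set δ1 : ℝ := min (δ / 6) (ε / 16) with hδ1def
      have hδ1 : 0 < δ1 := lt_min (by linarith) (by linarith)
      set γ : ℝ := δ1 / 2 with hγdef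
      have hγ : 0 < γ := by positivity
      have hγε : γ < ε := by
        have : δ1 ≤ ε / 16 := min_le_right _ _
        simp only [hγdef]; linarith
      obtain ⟨N1, hN1⟩ := (Metric.tendsto_atTop.mp hd) γ hγ
      obtain ⟨N2, hN2⟩ := (Metric.tendsto_atTop.mp hp) γ hγ
      have hdd : ∀ n ≥ max N1 N2, D n n < γ := by
        intro n hn
        have := hN1 n (le_trans (le_max_left _ _) hn)
        rw [Real.dist_eq, sub_zero, abs_of_nonneg (hD0 _ _)] at this
        exact this
      have hpp : ∀ n ≥ max N1 N2, D (n + 1) n < γ := by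
        intro n hn
        have := hN2 n (le_trans (le_max_right _ _) hn)
        rw [Real.dist_eq, sub_zero, abs_of_nonneg (hD0 _ _)] at this
        exact this
      set N : ℕ := max N1 N2 with hNdef
      have hstx : ∀ n ≥ N, dist (x n) (x (n + 1)) ≤ δ1 := by
        intro n hn
        have := hstepx n
        have h1 := hdd n hn
        have h2 := hpp n hn
        simp only [hγdef] at h1 h2
        linarith
      have hsty : ∀ n ≥ N, dist (y n) (y (n + 1)) ≤ δ1 := by
        intro n hn
        have := hstepy n
        have h1 := hdd n hn
        have h2 := hpp n hn
        simp only [hγdef] at h1 h2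
        linarith
      -- get a bad pair beyond N + 1
      obtain ⟨m, hm, n, hn, hDmn⟩ := hbad (N + 1)
      -- wlog a > b
      have hex : ∃ a b : ℕ, N + 1 ≤ b ∧ b < a ∧ ε ≤ D a b := by
        rcases lt_trichotomy m n with h | h | h
        · exact ⟨n, m, hm, h, by rwa [hDsymm]⟩
        · exfalso
          have := hdd n (le_trans (Nat.le_succ _) hn)
          rw [h] at hDmn
          linarith
        · exact ⟨m, n, hn, h, hDmn⟩
      obtain ⟨a, b, hbN, hba, hDab⟩ := hex
      have hfind : ∃ j, b < j ∧ ε ≤ D j b := ⟨a, hba, hDab⟩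
      have hm'gt : b < Nat.find hfind := (Nat.find_spec hfind).1
      have hDm' : ε ≤ D (Nat.find hfind) b := (Nat.find_spec hfind).2
      have hmin : ∀ j, j < Nat.find hfind → ¬(b < j ∧ ε ≤ D j b) := fun j hj =>
        Nat.find_min hfind hj
      have hbN' : N ≤ b := le_trans (Nat.le_succ _) hbN
      have hm'ne : Nat.find hfind ≠ b + 1 := by
        intro h
        have := hpp b hbN'
        rw [h] at hDm'
        linarith
      have hm'ge : b + 2 ≤ Nat.find hfind := by omega
      -- write Nat.find hfind = k + 1, b = c + 1
      obtain ⟨k, hk⟩ : ∃ k, Nat.find hfind = k + 1 := ⟨Nat.find hfind - 1, by omega⟩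
      obtain ⟨c, hc⟩ : ∃ c, b = c + 1 := ⟨b - 1, by omega⟩
      rw [hk, hc] at hDm' hm'gt
      have hkb : c + 1 < k := by omega
      have hDkb : D k (c + 1) < ε := by
        by_contra h
        exact hmin k (by omega) ⟨by omega, by rw [hc]; exact not_lt.mp h⟩
      have hkN : N ≤ k := by omega
      have hcN : N ≤ c := by omega
      -- bounds on D' := D k c
      have hcontr' : ψ (D (k + 1) (c + 1)) ≤ ψ (D k c) - φ (D k c) := key k c
      have hub1 : D (k + 1) (c + 1) ≤ D k (c + 1) + 2 * δ1 := by
        have h0 := hlip (k + 1) (c + 1) k (c + 1)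
        have h1 := hstx k hkN
        have h2 := hsty k hkN
        rw [dist_comm (x (k + 1)) (x k), dist_comm (y (k + 1)) (y k)] at h0
        simp only [dist_self] at h0
        linarith
      have hub : D k c ≤ ε + 6 * δ1 := by
        have h0 := hlip k c (k + 1) (c + 1)
        have h1 := hstx k hkN
        have h2 := hsty k hkN
        have h3 := hstx c hcN
        have h4 := hsty c hcN
        linarith
      have hlb : ε - 4 * δ1 ≤ D k c := by
        have h0 := hlip (k + 1) (c + 1) k c
        have h1 := hstx k hkN
        have h2 := hsty k hkN
        have h3 := hstx c hcN
        have h4 := hsty c hcN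
        rw [dist_comm (x (k + 1)) (x k), dist_comm (y (k + 1)) (y k),
          dist_comm (x (c + 1)) (x c), dist_comm (y (c + 1)) (y c)] at h0
        linarith
      have hδ1ε : δ1 ≤ ε / 16 := min_le_right _ _
      have hδ1δ : δ1 ≤ δ / 6 := min_le_left _ _
      have hhalf : ε / 2 ≤ D k c := by linarith
      have hchain1 : ψ ε ≤ ψ (D (k + 1) (c + 1)) := hψm ε _ hε.le hDm'
      have hchain2 : φ (ε / 2) ≤ φ (D k c) := hφm _ _ (by linarith) hhalf
      have hchain3 : ψ (D k c) ≤ ψ (ε + δ) := hψm _ _ (hD0 _ _) (by linarith)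
      linarith
    -- take the limit δ → 0⁺
    have hmap : Filter.Tendsto (fun δ : ℝ => ε + δ) (nhdsWithin 0 (Set.Ioi 0))
        (nhdsWithin ε (Set.Ici 0)) := by
      apply Filter.Tendsto.mono_right ?_ ?_
      · exact nhdsWithin (ε + 0) (Set.Ici 0)
      · apply tendsto_nhdsWithin_of_tendsto_nhds_of_eventually_within
        · exact (continuous_const.add continuous_id).continuousAt.tendsto.mono_left
            nhdsWithin_le_nhds
        · filter_upwards [self_mem_nhdsWithin] with t ht
          exact Set.mem_Ici.mpr (by simp at ht ⊢; linarith)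
      · rw [add_zero]
    have hψlim : Filter.Tendsto (fun δ : ℝ => ψ (ε + δ)) (nhdsWithin 0 (Set.Ioi 0))
        (nhds (ψ ε)) := ((hψc ε (Set.mem_Ici.mpr hε.le)).tendsto).comp hmap
    have hle : ψ ε + φ (ε / 2) ≤ ψ ε := by
      refine ge_of_tendsto hψlim ?_
      filter_upwards [self_mem_nhdsWithin] with δ hδ
      exact hclaim δ hδ
    have := hφpos (ε / 2) (by linarith)
    linarith
  -- Cauchy sequences
  have hxC : CauchySeq x := by
    rw [Metric.cauchySeq_iff]
    intro ε hε
    obtain ⟨N1, hN1⟩ := huniform (ε / 2) (by linarith)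
    obtain ⟨N2, hN2⟩ := (Metric.tendsto_atTop.mp hd) (ε / 2) (by linarith)
    refine ⟨max N1 N2, fun m hm n hn => ?_⟩
    have h1 : D m n < ε / 2 := hN1 m (le_trans (le_max_left _ _) hm) n
      (le_trans (le_max_left _ _) hn)
    have h2 : D n n < ε / 2 := by
      have := hN2 n (le_trans (le_max_right _ _) hn)
      rw [Real.dist_eq, sub_zero, abs_of_nonneg (hD0 _ _)] at this
      exact this
    have h3 : dist (x m) (y n) ≤ D m n := le_max_left _ _
    have h4 : dist (y n) (x n) ≤ D n n := le_max_right _ _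
    calc dist (x m) (x n) ≤ dist (x m) (y n) + dist (y n) (x n) := dist_triangle _ _ _
      _ < ε := by linarith
  obtain ⟨z, hz⟩ := cauchySeq_tendsto_of_complete hxC
  have hdyx : Filter.Tendsto (fun n => dist (y n) (x n)) Filter.atTop (nhds 0) := by
    apply squeeze_zero (fun n => dist_nonneg) (fun n => le_max_right (dist (x n) (y n)) _) hd
  have hyz : Filter.Tendsto y Filter.atTop (nhds z) := by
    rw [tendsto_iff_dist_tendsto_zero]
    apply squeeze_zero (fun n => dist_nonneg) (fun n => dist_triangle (y n) (x n) z)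
    have hxz : Filter.Tendsto (fun n => dist (x n) z) Filter.atTop (nhds 0) :=
      tendsto_iff_dist_tendsto_zero.mp hz
    simpa using hdyx.add hxz
  have hzA : z ∈ A := hAcl.mem_of_tendsto hz (Filter.Eventually.of_forall fun n => (hmem n).1)
  have hzB : z ∈ B := hBcl.mem_of_tendsto hyz (Filter.Eventually.of_forall fun n => (hmem n).2)
  refine ⟨z, ⟨hzA, hzB⟩, ?_⟩
  -- show F z z = z
  by_contra hne
  have hδ : 0 < dist (F z z) z := dist_pos.mpr hne
  set δ := dist (F z z) z with hδdef
  have hkey2 : ∀ n, ψ (dist (F z z) (x (n + 1))) ≤ ψ (max (dist z (y n)) (dist z (x n))) := by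
    intro n
    rw [(hstep n).1]
    have h := hcontr z hzA (x n) (hmem n).1 z hzB (y n) (hmem n).2
    have h0 : 0 ≤ max (dist z (y n)) (dist z (x n)) :=
      le_trans dist_nonneg (le_max_left _ _)
    have := hφ0 _ h0
    linarith
  have hmaxlim : Filter.Tendsto (fun n => max (dist z (y n)) (dist z (x n)))
      Filter.atTop (nhds 0) := by
    have h1 : Filter.Tendsto (fun n => dist z (y n)) Filter.atTop (nhds 0) := by
      have := tendsto_iff_dist_tendsto_zero.mp hyz
      simpa [dist_comm] using this
    have h2 : Filter.Tendsto (fun n => dist z (x n)) Filter.atTop (nhds 0) := by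
      have := tendsto_iff_dist_tendsto_zero.mp hz
      simpa [dist_comm] using this
    simpa using h1.max h2
  have hψlim0 : Filter.Tendsto (fun n => ψ (max (dist z (y n)) (dist z (x n))))
      Filter.atTop (nhds 0) := by
    have hmap : Filter.Tendsto (fun n => max (dist z (y n)) (dist z (x n)))
        Filter.atTop (nhdsWithin 0 (Set.Ici 0)) := by
      apply tendsto_nhdsWithin_of_tendsto_nhds_of_eventually_within _ hmaxlim
      exact Filter.Eventually.of_forall fun n =>
        Set.mem_Ici.mpr (le_trans dist_nonneg (le_max_left _ _))
    have := ((hψc 0 Set.self_mem_Ici).tendsto).comp hmap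
    rwa [(hψz 0 le_rfl).mpr rfl] at this
  -- eventually dist (F z z) (x (n+1)) ≥ δ / 2
  have hev : ∀ᶠ n in Filter.atTop, δ / 2 ≤ dist (F z z) (x (n + 1)) := by
    have hxz : Filter.Tendsto (fun n => dist (x (n + 1)) z) Filter.atTop (nhds 0) := by
      have := tendsto_iff_dist_tendsto_zero.mp hz
      exact this.comp (Filter.tendsto_add_atTop_nat 1)
    have := hxz.eventually (gt_mem_nhds (show (0:ℝ) < δ / 2 by linarith))
    filter_upwards [this] with n hn
    have := dist_triangle (F z z) (x (n + 1)) z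
    simp only [← hδdef] at this ⊢
    linarith
  have hev2 : ∀ᶠ n in Filter.atTop, ψ (δ / 2) ≤ ψ (max (dist z (y n)) (dist z (x n))) := by
    filter_upwards [hev] with n hn
    exact le_trans (hψm _ _ (by linarith) hn) (hkey2 n)
  have hfinal : ψ (δ / 2) ≤ 0 := ge_of_tendsto hψlim0 hev2
  have := hψpos (δ / 2) (by linarith)
  linarith
end

section
/- Let A, B be nonempty closed subsets of a complete metric space (X,d) and F a (φ,ψ)-contraction type coupling w.r.t. A and B. If l, m ∈ A ∩ B satisfy F(l,l) = l and F(m,m) = m, then l = m; i.e., the strong coupled fixed point of F in A ∩ B is unique. -/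
/-- Theorem 2.2.2 (uniqueness): strong coupled fixed points in A ∩ B coincide. -/
theorem stmt_12
    {X : Type*} [MetricSpace X] [CompleteSpace X]
    (A B : Set X) (hA : A.Nonempty) (hB : B.Nonempty)
    (hAcl : IsClosed A) (hBcl : IsClosed B)
    (F : X → X → X)
    (hcoupling : ∀ x ∈ A, ∀ y ∈ B, F x y ∈ B ∧ F y x ∈ A)
    (φ ψ : ℝ → ℝ)
    (hφ0 : ∀ t, 0 ≤ t → 0 ≤ φ t) (hψ0 : ∀ t, 0 ≤ t → 0 ≤ ψ t)
    (hφc : ContinuousOn φ (Set.Ici 0)) (hψc : ContinuousOn ψ (Set.Ici 0))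
    (hφm : ∀ s t, 0 ≤ s → s ≤ t → φ s ≤ φ t) (hψm : ∀ s t, 0 ≤ s → s ≤ t → ψ s ≤ ψ t)
    (hφz : ∀ t, 0 ≤ t → (φ t = 0 ↔ t = 0)) (hψz : ∀ t, 0 ≤ t → (ψ t = 0 ↔ t = 0))
    (hcontr : ∀ x ∈ A, ∀ v ∈ A, ∀ y ∈ B, ∀ u ∈ B,
      ψ (dist (F x y) (F u v)) ≤
        ψ (max (dist x u) (dist y v)) - φ (max (dist x u) (dist y v)))
    (l m : X) (hl : l ∈ A ∩ B) (hm : m ∈ A ∩ B)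
    (hfl : F l l = l) (hfm : F m m = m) :
    l = m := by
  have h := hcontr l hl.1 m hm.1 l hl.2 m hm.2
  rw [hfl, hfm, max_self] at h
  have hd : (0:ℝ) ≤ dist l m := dist_nonneg
  have hφle : φ (dist l m) ≤ 0 := by linarith
  have hφ := le_antisymm hφle (hφ0 _ hd)
  have := (hφz _ hd).mp hφ
  exact dist_eq_zero.mp this
end

section
/- Let A, B be nonempty subsets of a metric space (X,d), F a (φ,ψ)-contraction type coupling w.r.t. A and B, and sequences {x_n} ⊆ A, {y_n} ⊆ B defined by x_{n+1} = F(y_n, x_n), y_{n+1} = F(x_n, y_n) from x₀ ∈ A, y₀ ∈ B. Then the sequence D_n = max{d(x_{n+1}, y_n), d(y_{n+1}, x_n)} is monotonically non-increasing and converges to 0. -/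
/-- D_n = max{d(x_{n+1},y_n), d(y_{n+1},x_n)} is non-increasing and tends to 0. -/
theorem stmt_13
    {X : Type*} [MetricSpace X]
    (A B : Set X) (hA : A.Nonempty) (hB : B.Nonempty)
    (F : X → X → X)
    (hcoupling : ∀ x ∈ A, ∀ y ∈ B, F x y ∈ B ∧ F y x ∈ A)
    (φ ψ : ℝ → ℝ)
    (hφ0 : ∀ t, 0 ≤ t → 0 ≤ φ t) (hψ0 : ∀ t, 0 ≤ t → 0 ≤ ψ t)
    (hφc : ContinuousOn φ (Set.Ici 0)) (hψc : ContinuousOn ψ (Set.Ici 0))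
    (hφm : ∀ s t, 0 ≤ s → s ≤ t → φ s ≤ φ t) (hψm : ∀ s t, 0 ≤ s → s ≤ t → ψ s ≤ ψ t)
    (hφz : ∀ t, 0 ≤ t → (φ t = 0 ↔ t = 0)) (hψz : ∀ t, 0 ≤ t → (ψ t = 0 ↔ t = 0))
    (hcontr : ∀ x ∈ A, ∀ v ∈ A, ∀ y ∈ B, ∀ u ∈ B,
      ψ (dist (F x y) (F u v)) ≤
        ψ (max (dist x u) (dist y v)) - φ (max (dist x u) (dist y v)))
    (x y : ℕ → X) (hx0 : x 0 ∈ A) (hy0 : y 0 ∈ B)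
    (hx : ∀ n, x n ∈ A) (hy : ∀ n, y n ∈ B)
    (hxrec : ∀ n, x (n + 1) = F (y n) (x n))
    (hyrec : ∀ n, y (n + 1) = F (x n) (y n))
    (D : ℕ → ℝ)
    (hD : ∀ n, D n = max (dist (x (n + 1)) (y n)) (dist (y (n + 1)) (x n))) :
    (∀ n, D (n + 1) ≤ D n) ∧ Filter.Tendsto D Filter.atTop (nhds 0) := by

  have hDnn : ∀ n, 0 ≤ D n := fun n => by
    rw [hD n]; exact le_max_of_le_left dist_nonneg
  -- key inequality
  have hkey : ∀ n, ψ (D (n + 1)) ≤ ψ (D n) - φ (D n) := by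
    intro n
    have ha : ψ (dist (x (n + 2)) (y (n + 1))) ≤ ψ (D n) - φ (D n) := by
      have h := hcontr (x n) (hx n) (x (n + 1)) (hx (n + 1)) (y n) (hy n)
        (y (n + 1)) (hy (n + 1))
      rw [← hyrec n, ← hxrec (n + 1)] at h
      rw [dist_comm]
      calc ψ (dist (y (n + 1)) (x (n + 2)))
          ≤ ψ (max (dist (x n) (y (n + 1))) (dist (y n) (x (n + 1)))) -
            φ (max (dist (x n) (y (n + 1))) (dist (y n) (x (n + 1)))) := h
        _ = ψ (D n) - φ (D n) := by
            rw [hD n, dist_comm (x n), dist_comm (y n), max_comm]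
    have hb : ψ (dist (y (n + 2)) (x (n + 1))) ≤ ψ (D n) - φ (D n) := by
      have h := hcontr (x (n + 1)) (hx (n + 1)) (x n) (hx n) (y (n + 1))
        (hy (n + 1)) (y n) (hy n)
      rw [← hyrec (n + 1), ← hxrec n] at h
      calc ψ (dist (y (n + 2)) (x (n + 1)))
          ≤ ψ (max (dist (x (n + 1)) (y n)) (dist (y (n + 1)) (x n))) -
            φ (max (dist (x (n + 1)) (y n)) (dist (y (n + 1)) (x n))) := h
        _ = ψ (D n) - φ (D n) := by rw [hD n]
    rw [hD (n + 1)]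
    rcases le_total (dist (x (n + 2)) (y (n + 1))) (dist (y (n + 2)) (x (n + 1)))
      with h | h
    · rw [max_eq_right h]; exact hb
    · rw [max_eq_left h]; exact ha
  have hψ0' : ψ 0 = 0 := (hψz 0 le_rfl).mpr rfl
  have hφ0' : φ 0 = 0 := (hφz 0 le_rfl).mpr rfl
  -- monotonicity
  have hmono : ∀ n, D (n + 1) ≤ D n := by
    intro n
    by_contra h
    push_neg at h
    have h1 : ψ (D n) ≤ ψ (D (n + 1)) := hψm _ _ (hDnn n) h.le
    have h2 : φ (D n) ≤ 0 := by linarith [hkey n]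
    have h3 : φ (D n) = 0 := le_antisymm h2 (hφ0 _ (hDnn n))
    have h4 : D n = 0 := (hφz _ (hDnn n)).mp h3
    have h5 : ψ (D (n + 1)) ≤ 0 := by
      have := hkey n; rw [h4, hψ0', hφ0'] at this; linarith
    have h6 : D (n + 1) = 0 :=
      (hψz _ (hDnn (n + 1))).mp (le_antisymm h5 (hψ0 _ (hDnn (n + 1))))
    rw [h4, h6] at h; exact lt_irrefl 0 h
  refine ⟨hmono, ?_⟩
  -- convergence
  have hanti : Antitone D := antitone_nat_of_succ_le hmono
  have hbdd : BddBelow (Set.range D) := ⟨0, by rintro _ ⟨n, rfl⟩; exact hDnn n⟩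
  set L := ⨅ n, D n with hL
  have hDL : Filter.Tendsto D Filter.atTop (nhds L) :=
    tendsto_atTop_ciInf hanti hbdd
  have hL0 : 0 ≤ L := le_ciInf fun n => hDnn n
  have hDL' : Filter.Tendsto D Filter.atTop (nhdsWithin L (Set.Ici 0)) := by
    rw [tendsto_nhdsWithin_iff]
    exact ⟨hDL, Filter.Eventually.of_forall fun n => hDnn n⟩
  have hψL : Filter.Tendsto (fun n => ψ (D n)) Filter.atTop (nhds (ψ L)) :=
    (hψc L hL0).tendsto.comp hDL'
  have hφL : Filter.Tendsto (fun n => φ (D n)) Filter.atTop (nhds (φ L)) :=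
    (hφc L hL0).tendsto.comp hDL'
  have hψL' : Filter.Tendsto (fun n => ψ (D (n + 1))) Filter.atTop (nhds (ψ L)) :=
    hψL.comp (Filter.tendsto_add_atTop_nat 1)
  have hle : ψ L ≤ ψ L - φ L :=
    le_of_tendsto_of_tendsto' hψL' (hψL.sub hφL) hkey
  have hφLz : φ L = 0 := le_antisymm (by linarith) (hφ0 _ hL0)
  have : L = 0 := (hφz _ hL0).mp hφLz
  rwa [this] at hDL
end

section
/- Let A, B be nonempty subsets of a metric space (X,d), F a (φ,ψ)-contraction type coupling w.r.t. A and B, and sequences defined by x_{n+1} = F(y_n, x_n), y_{n+1} = F(x_n, y_n) with x₀ ∈ A, y₀ ∈ B. Then d(x_n, y_n) ≤ d(x_{n-1}, y_{n-1}) for all n ≥ 1 and lim_{n→∞} d(x_n, y_n) = 0. -/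
/-- d(x_n,y_n) is non-increasing and tends to 0. -/
theorem stmt_14
    {X : Type*} [MetricSpace X]
    (A B : Set X) (hA : A.Nonempty) (hB : B.Nonempty)
    (F : X → X → X)
    (hcoupling : ∀ x ∈ A, ∀ y ∈ B, F x y ∈ B ∧ F y x ∈ A)
    (φ ψ : ℝ → ℝ)
    (hφ0 : ∀ t, 0 ≤ t → 0 ≤ φ t) (hψ0 : ∀ t, 0 ≤ t → 0 ≤ ψ t)
    (hφc : ContinuousOn φ (Set.Ici 0)) (hψc : ContinuousOn ψ (Set.Ici 0))
    (hφm : ∀ s t, 0 ≤ s → s ≤ t → φ s ≤ φ t) (hψm : ∀ s t, 0 ≤ s → s ≤ t → ψ s ≤ ψ t)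
    (hφz : ∀ t, 0 ≤ t → (φ t = 0 ↔ t = 0)) (hψz : ∀ t, 0 ≤ t → (ψ t = 0 ↔ t = 0))
    (hcontr : ∀ x ∈ A, ∀ v ∈ A, ∀ y ∈ B, ∀ u ∈ B,
      ψ (dist (F x y) (F u v)) ≤
        ψ (max (dist x u) (dist y v)) - φ (max (dist x u) (dist y v)))
    (x y : ℕ → X) (hx0 : x 0 ∈ A) (hy0 : y 0 ∈ B)
    (hx : ∀ n, x n ∈ A) (hy : ∀ n, y n ∈ B)
    (hxrec : ∀ n, x (n + 1) = F (y n) (x n))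
    (hyrec : ∀ n, y (n + 1) = F (x n) (y n)) :
    (∀ n, dist (x (n + 1)) (y (n + 1)) ≤ dist (x n) (y n)) ∧
      Filter.Tendsto (fun n => dist (x n) (y n)) Filter.atTop (nhds 0) := by
  have h1 : ∀ n, ψ (dist (x (n+1)) (y (n+1))) ≤
      ψ (dist (x n) (y n)) - φ (dist (x n) (y n)) := by
    intro n
    have := hcontr (x n) (hx n) (x n) (hx n) (y n) (hy n) (y n) (hy n)
    rw [hxrec n, hyrec n]
    simpa [dist_comm (x n) (y n), dist_comm (F (x n) (y n))] using this
  have hmono : ∀ n, dist (x (n+1)) (y (n+1)) ≤ dist (x n) (y n) := by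
    intro n
    by_contra h
    push_neg at h
    have hd0 : (0:ℝ) ≤ dist (x n) (y n) := dist_nonneg
    have hψle : ψ (dist (x n) (y n)) ≤ ψ (dist (x (n+1)) (y (n+1))) :=
      hψm _ _ hd0 h.le
    have h1n := h1 n
    have hφle : φ (dist (x n) (y n)) ≤ 0 := by linarith
    have hdn0 : dist (x n) (y n) = 0 :=
      (hφz _ hd0).1 (le_antisymm hφle (hφ0 _ hd0))
    have hψ00 : ψ 0 = 0 := (hψz 0 le_rfl).2 rfl
    have hφ00 : φ 0 = 0 := (hφz 0 le_rfl).2 rfl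
    rw [hdn0] at h1n h
    have hψn1 : ψ (dist (x (n+1)) (y (n+1))) = 0 :=
      le_antisymm (by linarith) (hψ0 _ dist_nonneg)
    have := (hψz _ dist_nonneg).1 hψn1
    linarith
  refine ⟨hmono, ?_⟩
  have hanti : Antitone (fun n => dist (x n) (y n)) :=
    antitone_nat_of_succ_le hmono
  have hbdd : BddBelow (Set.range fun n => dist (x n) (y n)) :=
    ⟨0, by rintro r ⟨n, rfl⟩; exact dist_nonneg⟩
  have hL : Filter.Tendsto (fun n => dist (x n) (y n)) Filter.atTop
      (nhds (⨅ n, dist (x n) (y n))) := tendsto_atTop_ciInf hanti hbdd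
  set L := ⨅ n, dist (x n) (y n) with hLdef
  have hL0 : (0:ℝ) ≤ L := le_ciInf fun n => dist_nonneg
  have hin : Filter.Tendsto (fun n => dist (x n) (y n)) Filter.atTop
      (nhdsWithin L (Set.Ici 0)) :=
    tendsto_nhdsWithin_iff.mpr ⟨hL, Filter.Eventually.of_forall fun n => dist_nonneg⟩
  have hψtend : Filter.Tendsto (fun n => ψ (dist (x n) (y n))) Filter.atTop (nhds (ψ L)) :=
    (hψc L hL0).tendsto.comp hin
  have hφtend : Filter.Tendsto (fun n => φ (dist (x n) (y n))) Filter.atTop (nhds (φ L)) :=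
    (hφc L hL0).tendsto.comp hin
  have hψtend' : Filter.Tendsto (fun n => ψ (dist (x (n+1)) (y (n+1)))) Filter.atTop
      (nhds (ψ L)) := hψtend.comp (Filter.tendsto_add_atTop_nat 1)
  have key : ψ L ≤ ψ L - φ L :=
    le_of_tendsto_of_tendsto' hψtend' (hψtend.sub hφtend) h1
  have hφL : φ L = 0 := le_antisymm (by linarith) (hφ0 _ hL0)
  have hLz : L = 0 := (hφz _ hL0).1 hφL
  rw [hLz] at hL
  exact hL
end

section
/- Let A, B be nonempty subsets of a metric space (X,d), F a (φ,ψ)-contraction type coupling w.r.t. A and B, and sequences defined by x_{n+1} = F(y_n, x_n), y_{n+1} = F(x_n, y_n) with x₀ ∈ A, y₀ ∈ B. Then both {x_n} and {y_n} are Cauchy sequences. -/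
/-- the iterated sequences are Cauchy. -/
theorem stmt_15
    {X : Type*} [MetricSpace X]
    (A B : Set X) (hA : A.Nonempty) (hB : B.Nonempty)
    (F : X → X → X)
    (hcoupling : ∀ x ∈ A, ∀ y ∈ B, F x y ∈ B ∧ F y x ∈ A)
    (φ ψ : ℝ → ℝ)
    (hφ0 : ∀ t, 0 ≤ t → 0 ≤ φ t) (hψ0 : ∀ t, 0 ≤ t → 0 ≤ ψ t)
    (hφc : ContinuousOn φ (Set.Ici 0)) (hψc : ContinuousOn ψ (Set.Ici 0))
    (hφm : ∀ s t, 0 ≤ s → s ≤ t → φ s ≤ φ t) (hψm : ∀ s t, 0 ≤ s → s ≤ t → ψ s ≤ ψ t)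
    (hφz : ∀ t, 0 ≤ t → (φ t = 0 ↔ t = 0)) (hψz : ∀ t, 0 ≤ t → (ψ t = 0 ↔ t = 0))
    (hcontr : ∀ x ∈ A, ∀ v ∈ A, ∀ y ∈ B, ∀ u ∈ B,
      ψ (dist (F x y) (F u v)) ≤
        ψ (max (dist x u) (dist y v)) - φ (max (dist x u) (dist y v)))
    (x y : ℕ → X) (hx0 : x 0 ∈ A) (hy0 : y 0 ∈ B)
    (hx : ∀ n, x n ∈ A) (hy : ∀ n, y n ∈ B)
    (hxrec : ∀ n, x (n + 1) = F (y n) (x n))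
    (hyrec : ∀ n, y (n + 1) = F (x n) (y n)) :
    CauchySeq x ∧ CauchySeq y := by
  classical
  set D : ℕ → ℕ → ℝ := fun n m => max (dist (x n) (y m)) (dist (y n) (x m)) with hDdef
  have hD0 : ∀ n m, 0 ≤ D n m := fun n m => le_trans dist_nonneg (le_max_left _ _)
  have hDsymm : ∀ n m, D n m = D m n := by
    intro n m
    simp only [hDdef]
    rw [dist_comm (x n) (y m), dist_comm (y n) (x m), max_comm]
  -- basic values of φ, ψ at 0
  have hψzero : ψ 0 = 0 := (hψz 0 le_rfl).mpr rfl
  have hφzero : φ 0 = 0 := (hφz 0 le_rfl).mpr rfl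
  -- key contraction inequality for D
  have hkey : ∀ n m, ψ (D (n + 1) (m + 1)) ≤ ψ (D n m) - φ (D n m) := by
    intro n m
    have h1 : ψ (dist (x (n + 1)) (y (m + 1))) ≤ ψ (D n m) - φ (D n m) := by
      rw [hxrec, hyrec, dist_comm]
      have := hcontr (x m) (hx m) (x n) (hx n) (y m) (hy m) (y n) (hy n)
      have heq : max (dist (x m) (y n)) (dist (y m) (x n)) = D n m := by
        simp only [hDdef]
        rw [dist_comm (x m) (y n), dist_comm (y m) (x n), max_comm]
      rwa [heq] at this
    have h2 : ψ (dist (y (n + 1)) (x (m + 1))) ≤ ψ (D n m) - φ (D n m) := by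
      rw [hxrec, hyrec]
      exact hcontr (x n) (hx n) (x m) (hx m) (y n) (hy n) (y m) (hy m)
    rcases max_cases (dist (x (n + 1)) (y (m + 1))) (dist (y (n + 1)) (x (m + 1))) with
      ⟨h, _⟩ | ⟨h, _⟩
    · show ψ (max _ _) ≤ _; rw [h]; exact h1
    · show ψ (max _ _) ≤ _; rw [h]; exact h2
  -- ψ c ≤ ψ d - φ d  implies  c ≤ d  (for nonneg c d)
  have hBle : ∀ c d : ℝ, 0 ≤ c → 0 ≤ d → ψ c ≤ ψ d - φ d → c ≤ d := by
    intro c d hc hd h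
    by_contra hlt
    push_neg at hlt
    have h1 : ψ d ≤ ψ c := hψm d c hd hlt.le
    have hφd : φ d = 0 := le_antisymm (by linarith) (hφ0 d hd)
    have hd0 : d = 0 := (hφz d hd).mp hφd
    rw [hd0, hψzero, hφzero] at h
    have hc0 : ψ c = 0 := le_antisymm (by linarith) (hψ0 c hc)
    have : c = 0 := (hψz c hc).mp hc0
    rw [hd0, this] at hlt
    exact lt_irrefl 0 hlt
  have hdec : ∀ n m, D (n + 1) (m + 1) ≤ D n m := fun n m =>
    hBle _ _ (hD0 _ _) (hD0 _ _) (hkey n m)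
  -- continuity helper
  have htend : ∀ g : ℝ → ℝ, ContinuousOn g (Set.Ici 0) → ∀ (u : ℕ → ℝ) (L : ℝ),
      (∀ k, 0 ≤ u k) → 0 ≤ L → Filter.Tendsto u Filter.atTop (nhds L) →
      Filter.Tendsto (fun k => g (u k)) Filter.atTop (nhds (g L)) := by
    intro g hg u L hu hL hlim
    have h1 : Filter.Tendsto u Filter.atTop (nhdsWithin L (Set.Ici 0)) :=
      tendsto_nhdsWithin_of_tendsto_nhds_of_eventually_within u hlim
        (Filter.Eventually.of_forall hu)
    exact (hg L hL).tendsto.comp h1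
  -- sequences satisfying the ψ-φ recursion tend to 0
  have hzero : ∀ u : ℕ → ℝ, (∀ n, 0 ≤ u n) →
      (∀ n, ψ (u (n + 1)) ≤ ψ (u n) - φ (u n)) →
      Filter.Tendsto u Filter.atTop (nhds 0) := by
    intro u hu hk
    have hdecu : ∀ n, u (n + 1) ≤ u n := fun n => hBle _ _ (hu _) (hu _) (hk n)
    have hanti : Antitone u := antitone_nat_of_succ_le hdecu
    have hbdd : BddBelow (Set.range u) := by
      refine ⟨0, ?_⟩
      rintro r ⟨n, rfl⟩
      exact hu n
    have hconv : Filter.Tendsto u Filter.atTop (nhds (⨅ n, u n)) :=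
      tendsto_atTop_ciInf hanti hbdd
    set L := ⨅ n, u n with hLdef
    have hL : 0 ≤ L := le_ciInf hu
    have t1 : Filter.Tendsto (fun n => ψ (u n)) Filter.atTop (nhds (ψ L)) :=
      htend ψ hψc u L hu hL hconv
    have t2 : Filter.Tendsto (fun n => φ (u n)) Filter.atTop (nhds (φ L)) :=
      htend φ hφc u L hu hL hconv
    have t3 : Filter.Tendsto (fun n => ψ (u (n + 1))) Filter.atTop (nhds (ψ L)) :=
      t1.comp (Filter.tendsto_add_atTop_nat 1)
    have hle : ψ L ≤ ψ L - φ L := le_of_tendsto_of_tendsto' t3 (t1.sub t2) hk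
    have hφL : φ L = 0 := le_antisymm (by linarith) (hφ0 L hL)
    have hL0 : L = 0 := (hφz L hL).mp hφL
    rwa [hL0] at hconv
  -- diagonal sequences tend to 0
  have ha : Filter.Tendsto (fun n => D n n) Filter.atTop (nhds 0) :=
    hzero _ (fun n => hD0 n n) (fun n => hkey n n)
  have hb : Filter.Tendsto (fun n => D (n + 1) n) Filter.atTop (nhds 0) :=
    hzero _ (fun n => hD0 _ _) (fun n => hkey (n + 1) n)
  -- consecutive steps
  set s : ℕ → ℝ := fun j => max (dist (x j) (x (j + 1))) (dist (y j) (y (j + 1))) with hsdef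
  have hs0 : ∀ j, 0 ≤ s j := fun j => le_trans dist_nonneg (le_max_left _ _)
  have hsbound : ∀ j, s j ≤ D j j + D (j + 1) j := by
    intro j
    apply max_le
    · calc dist (x j) (x (j + 1)) ≤ dist (x j) (y j) + dist (y j) (x (j + 1)) :=
            dist_triangle _ _ _
        _ ≤ D j j + D (j + 1) j := by
            apply add_le_add
            · exact le_max_left _ _
            · rw [dist_comm]; exact le_max_left _ _
    · calc dist (y j) (y (j + 1)) ≤ dist (y j) (x j) + dist (x j) (y (j + 1)) :=
            dist_triangle _ _ _
        _ ≤ D j j + D (j + 1) j := by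
            apply add_le_add
            · rw [dist_comm]; exact le_max_left _ _
            · rw [dist_comm]; exact le_max_right _ _
  have hs : Filter.Tendsto s Filter.atTop (nhds 0) := by
    have := ha.add hb
    rw [add_zero] at this
    exact squeeze_zero hs0 hsbound this
  -- step bound in second variable
  have hstep : ∀ n m, D n (m + 1) ≤ D n m + s m := by
    intro n m
    apply max_le
    · calc dist (x n) (y (m + 1)) ≤ dist (x n) (y m) + dist (y m) (y (m + 1)) :=
            dist_triangle _ _ _
        _ ≤ D n m + s m := add_le_add (le_max_left _ _) (le_max_right _ _)
    · calc dist (y n) (x (m + 1)) ≤ dist (y n) (x m) + dist (x m) (x (m + 1)) :=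
            dist_triangle _ _ _
        _ ≤ D n m + s m := add_le_add (le_max_right _ _) (le_max_left _ _)
  -- shift bound
  have hshift : ∀ n m, |D (n + 1) (m + 1) - D n m| ≤ s n + s m := by
    intro n m
    have h1 : |dist (x (n + 1)) (y (m + 1)) - dist (x n) (y m)| ≤ s n + s m := by
      have := dist_dist_dist_le (x (n + 1)) (y (m + 1)) (x n) (y m)
      rw [Real.dist_eq] at this
      refine le_trans this (add_le_add ?_ ?_)
      · rw [dist_comm]; exact le_max_left _ _
      · rw [dist_comm]; exact le_max_right _ _
    have h2 : |dist (y (n + 1)) (x (m + 1)) - dist (y n) (x m)| ≤ s n + s m := by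
      have := dist_dist_dist_le (y (n + 1)) (x (m + 1)) (y n) (x m)
      rw [Real.dist_eq] at this
      refine le_trans this (add_le_add ?_ ?_)
      · rw [dist_comm]; exact le_max_right _ _
      · rw [dist_comm]; exact le_max_left _ _
    refine le_trans (abs_max_sub_max_le_max _ _ _ _) (max_le h1 h2)
  -- main claim : D n m → 0 uniformly
  have hDlim : ∀ ε : ℝ, 0 < ε → ∃ N, ∀ n, N ≤ n → ∀ m, N ≤ m → D n m < ε := by
    by_contra hcon
    push_neg at hcon
    obtain ⟨ε, hε, H0⟩ := hcon
    have H : ∀ N, ∃ n, N ≤ n ∧ ∃ m, n ≤ m ∧ ε ≤ D n m := by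
      intro N
      obtain ⟨n, hn, m, hm, hDnm⟩ := H0 N
      rcases le_total n m with h | h
      · exact ⟨n, hn, m, h, hDnm⟩
      · exact ⟨m, hm, n, h, by rwa [hDsymm]⟩
    obtain ⟨N₀, hN₀⟩ := Filter.eventually_atTop.mp (ha.eventually (gt_mem_nhds hε))
    choose nf hnf mf hmf hDf using H
    set nk : ℕ → ℕ := fun k => nf (k + N₀ + 1) with hnkdef
    have hnkge : ∀ k, k + N₀ + 1 ≤ nk k := fun k => hnf _
    have hex : ∀ k, ∃ j, nk k ≤ j ∧ ε ≤ D (nk k) j := fun k => ⟨mf _, hmf _, hDf _⟩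
    set mk : ℕ → ℕ := fun k => Nat.find (hex k) with hmkdef
    have hmk1 : ∀ k, nk k ≤ mk k := fun k => (Nat.find_spec (hex k)).1
    have hmk2 : ∀ k, ε ≤ D (nk k) (mk k) := fun k => (Nat.find_spec (hex k)).2
    have hmkgt : ∀ k, nk k < mk k := by
      intro k
      rcases lt_or_eq_of_le (hmk1 k) with h | h
      · exact h
      · exfalso
        have h1 : D (nk k) (nk k) < ε := hN₀ _ (by have := hnkge k; omega)
        have h2 := hmk2 k
        rw [← h] at h2
        linarith
    have hmin : ∀ k, D (nk k) (mk k - 1) < ε := by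
      intro k
      have hlt : mk k - 1 < mk k := by have := hmkgt k; omega
      have := Nat.find_min (hex k) hlt
      push_neg at this
      exact lt_of_not_ge fun h => absurd (this (by have := hmkgt k; omega)) (not_lt.mpr h)
    have hmeq : ∀ k, mk k - 1 + 1 = mk k := by intro k; have := hmkgt k; omega
    have hneq : ∀ k, nk k - 1 + 1 = nk k := by intro k; have := hnkge k; omega
    -- mk k - 1 and nk k - 1 tend to infinity
    have hmtop : Filter.Tendsto (fun k => mk k - 1) Filter.atTop Filter.atTop := by
      apply Filter.tendsto_atTop_mono _ Filter.tendsto_id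
      intro k
      simp only [id_eq]
      have h1 := hnkge k; have h2 := hmk1 k; omega
    have hntop : Filter.Tendsto (fun k => nk k - 1) Filter.atTop Filter.atTop := by
      apply Filter.tendsto_atTop_mono _ Filter.tendsto_id
      intro k
      simp only [id_eq]
      have h1 := hnkge k; omega
    set ek : ℕ → ℝ := fun k => D (nk k) (mk k) with hekdef
    set fk : ℕ → ℝ := fun k => D (nk k - 1) (mk k - 1) with hfkdef
    have hsm : Filter.Tendsto (fun k => s (mk k - 1)) Filter.atTop (nhds 0) := hs.comp hmtop
    have hsn : Filter.Tendsto (fun k => s (nk k - 1)) Filter.atTop (nhds 0) := hs.comp hntop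
    have hekub : ∀ k, ek k ≤ ε + s (mk k - 1) := by
      intro k
      have h1 : D (nk k) (mk k - 1 + 1) ≤ D (nk k) (mk k - 1) + s (mk k - 1) := hstep _ _
      rw [hmeq] at h1
      exact le_trans h1 (add_le_add (hmin k).le le_rfl)
    have hek : Filter.Tendsto ek Filter.atTop (nhds ε) := by
      have hub : Filter.Tendsto (fun k => ε + s (mk k - 1)) Filter.atTop (nhds ε) := by
        simpa using hsm.const_add ε
      exact tendsto_of_tendsto_of_tendsto_of_le_of_le tendsto_const_nhds hub hmk2 hekub
    have hdiff : Filter.Tendsto (fun k => fk k - ek k) Filter.atTop (nhds 0) := by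
      have hb2 : Filter.Tendsto (fun k => s (nk k - 1) + s (mk k - 1)) Filter.atTop (nhds 0) := by
        have := hsn.add hsm
        rwa [add_zero] at this
      refine squeeze_zero_norm (fun k => ?_) hb2
      have := hshift (nk k - 1) (mk k - 1)
      rw [hneq, hmeq] at this
      rw [Real.norm_eq_abs, abs_sub_comm]
      exact this
    have hfk : Filter.Tendsto fk Filter.atTop (nhds ε) := by
      have h := hek.add hdiff
      rw [add_zero] at h
      have heq : (fun k => ek k + (fk k - ek k)) = fk := by funext k; ring
      rwa [heq] at h
    have t1 : Filter.Tendsto (fun k => ψ (ek k)) Filter.atTop (nhds (ψ ε)) :=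
      htend ψ hψc ek ε (fun k => hD0 _ _) hε.le hek
    have t2 : Filter.Tendsto (fun k => ψ (fk k)) Filter.atTop (nhds (ψ ε)) :=
      htend ψ hψc fk ε (fun k => hD0 _ _) hε.le hfk
    have t3 : Filter.Tendsto (fun k => φ (fk k)) Filter.atTop (nhds (φ ε)) :=
      htend φ hφc fk ε (fun k => hD0 _ _) hε.le hfk
    have hineq : ∀ k, ψ (ek k) ≤ ψ (fk k) - φ (fk k) := by
      intro k
      have := hkey (nk k - 1) (mk k - 1)
      rw [hneq, hmeq] at this
      exact this
    have hfin : ψ ε ≤ ψ ε - φ ε := le_of_tendsto_of_tendsto' t1 (t2.sub t3) hineq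
    have hφε : φ ε = 0 := le_antisymm (by linarith) (hφ0 ε hε.le)
    have : ε = 0 := (hφz ε hε.le).mp hφε
    linarith
  -- assemble
  constructor
  · rw [Metric.cauchySeq_iff]
    intro ε hε
    obtain ⟨N₁, hN₁⟩ := hDlim (ε / 2) (half_pos hε)
    obtain ⟨N₂, hN₂⟩ := Filter.eventually_atTop.mp (ha.eventually (gt_mem_nhds (half_pos hε)))
    refine ⟨max N₁ N₂, fun m hm n hn => ?_⟩
    have h1 : dist (x m) (y m) < ε / 2 :=
      lt_of_le_of_lt (le_max_left _ _) (hN₂ m (le_trans (le_max_right _ _) hm))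
    have h2 : dist (y m) (x n) < ε / 2 :=
      lt_of_le_of_lt (le_max_right _ _)
        (hN₁ m (le_trans (le_max_left _ _) hm) n (le_trans (le_max_left _ _) hn))
    calc dist (x m) (x n) ≤ dist (x m) (y m) + dist (y m) (x n) := dist_triangle _ _ _
      _ < ε / 2 + ε / 2 := add_lt_add h1 h2
      _ = ε := add_halves ε
  · rw [Metric.cauchySeq_iff]
    intro ε hε
    obtain ⟨N₁, hN₁⟩ := hDlim (ε / 2) (half_pos hε)
    obtain ⟨N₂, hN₂⟩ := Filter.eventually_atTop.mp (ha.eventually (gt_mem_nhds (half_pos hε)))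
    refine ⟨max N₁ N₂, fun m hm n hn => ?_⟩
    have h1 : dist (y m) (x m) < ε / 2 := by
      rw [dist_comm]
      exact lt_of_le_of_lt (le_max_left _ _) (hN₂ m (le_trans (le_max_right _ _) hm))
    have h2 : dist (x m) (y n) < ε / 2 :=
      lt_of_le_of_lt (le_max_left _ _)
        (hN₁ m (le_trans (le_max_left _ _) hm) n (le_trans (le_max_left _ _) hn))
    calc dist (y m) (y n) ≤ dist (y m) (x m) + dist (x m) (y n) := dist_triangle _ _ _
      _ < ε / 2 + ε / 2 := add_lt_add h1 h2
      _ = ε := add_halves ε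
end
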